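/- arXiv:1907.13417 — 4 statements merged into one kernel-verified Lean document; each statement's English description precedes it below -/
import Mathlib

section
/- Let m ≥ 0 and let f = ∏_i (x − a_i)^{b_i} with a_1,…,a_r ∈ ℂ pairwise distinct and b_1,…,b_r ∈ ℤ. Then there exists a polynomial P ∈ Q_m(f) such that P(x,x) = ∏_{i=1}^r (x − a_i)^{d_m(b_i)}. -/
namespace Stmt13
noncomputable section
section Univariate
open Polynomial

open Polynomial

/-- Padé denominator coefficients, defined by a 2-term recurrence. -/
def qc (m n : ℕ) : ℕ → ℂ
  | 0 => 1
  | k+1 => (-(((m:ℂ)-(k:ℂ))*((n:ℂ)-(m:ℂ)+(k:ℂ))) / (((k:ℂ)+1)*(2*(m:ℂ)-(k:ℂ)))) * qc m n k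

/-- Padé numerator coefficients. -/
def pcc (m n : ℕ) : ℕ → ℂ
  | 0 => 1
  | k+1 => ((((m:ℂ)-(k:ℂ))*((n:ℂ)+(m:ℂ)-(k:ℂ))) / (((k:ℂ)+1)*(2*(m:ℂ)-(k:ℂ)))) * pcc m n k

lemma qc_zero (m n : ℕ) : ∀ k, m < k → qc m n k = 0 := by
  intro k hk
  induction k with
  | zero => omega
  | succ k ih =>
    rcases Nat.lt_or_ge m k with h | h
    · rw [qc, ih h, mul_zero]
    · have hmk : m = k := by omega
      subst hmk
      rw [qc, sub_self, zero_mul, neg_zero, zero_div, zero_mul]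

lemma pcc_zero (m n : ℕ) : ∀ k, m < k → pcc m n k = 0 := by
  intro k hk
  induction k with
  | zero => omega
  | succ k ih =>
    rcases Nat.lt_or_ge m k with h | h
    · rw [pcc, ih h, mul_zero]
    · have hmk : m = k := by omega
      subst hmk
      rw [pcc, sub_self, zero_mul, zero_div, zero_mul]

lemma den1_ne_zero (k : ℕ) : ((k:ℂ)+1) ≠ 0 := Nat.cast_add_one_ne_zero k

lemma den2_ne_zero {m k : ℕ} (hk : k < 2*m) : (2*(m:ℂ)-(k:ℂ)) ≠ 0 := by
  have h : ((2*m : ℕ) : ℂ) ≠ ((k:ℕ):ℂ) := by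
    exact_mod_cast (by omega : (2*m : ℕ) ≠ k)
  push_cast at h
  exact sub_ne_zero_of_ne h

lemma qc_rec (m n : ℕ) (k : ℕ) :
    (((k:ℂ)+1)*(2*(m:ℂ)-(k:ℂ))) * qc m n (k+1)
      = -(((m:ℂ)-(k:ℂ))*((n:ℂ)-(m:ℂ)+(k:ℂ))) * qc m n k := by
  rcases Nat.lt_or_ge k (2*m) with h | h
  · rw [qc]
    field_simp [den1_ne_zero k, den2_ne_zero h]
    try ring
  · -- k ≥ 2m : both sides vanish
    rcases Nat.eq_zero_or_pos m with hm | hm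
    · subst hm
      rcases Nat.eq_zero_or_pos k with hk | hk
      · subst hk; norm_num [qc, sub_self]
      · rw [qc_zero 0 n k (by omega), qc_zero 0 n (k+1) (by omega), mul_zero, mul_zero]
    · rw [qc_zero m n k (by omega), qc_zero m n (k+1) (by omega), mul_zero, mul_zero]

lemma pcc_rec (m n : ℕ) (k : ℕ) :
    (((k:ℂ)+1)*(2*(m:ℂ)-(k:ℂ))) * pcc m n (k+1)
      = (((m:ℂ)-(k:ℂ))*((n:ℂ)+(m:ℂ)-(k:ℂ))) * pcc m n k := by
  rcases Nat.lt_or_ge k (2*m) with h | h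
  · rw [pcc]
    field_simp [den1_ne_zero k, den2_ne_zero h]
    try ring
  · rcases Nat.eq_zero_or_pos m with hm | hm
    · subst hm
      rcases Nat.eq_zero_or_pos k with hk | hk
      · subst hk; norm_num [pcc, sub_self]
      · rw [pcc_zero 0 n k (by omega), pcc_zero 0 n (k+1) (by omega), mul_zero, mul_zero]
    · rw [pcc_zero m n k (by omega), pcc_zero m n (k+1) (by omega), mul_zero, mul_zero]

/-- the polynomial with coefficients `f k`, degree ≤ m -/
def cpoly (f : ℕ → ℂ) (m : ℕ) : ℂ[X] := ∑ k ∈ Finset.range (m+1), C (f k) * X ^ k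

lemma coeff_cpoly (f : ℕ → ℂ) (m : ℕ) (hf : ∀ k, m < k → f k = 0) (k : ℕ) :
    (cpoly f m).coeff k = f k := by
  rw [cpoly, finset_sum_coeff]
  rcases Nat.lt_or_ge k (m+1) with h | h
  · rw [Finset.sum_eq_single k]
    · simp
    · intro b _ hb
      simp [coeff_X_pow, (Ne.symm hb)]
    · intro hk; exact absurd (Finset.mem_range.mpr h) hk
  · rw [Finset.sum_eq_zero, hf k (by omega)]
    intro b hb
    have : k ≠ b := by have := Finset.mem_range.mp hb; omega
    simp [coeff_X_pow, this]

lemma natDegree_cpoly (f : ℕ → ℂ) (m : ℕ) : (cpoly f m).natDegree ≤ m := by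
  apply Polynomial.natDegree_sum_le_of_forall_le
  intro i hi
  refine le_trans (natDegree_C_mul_le _ _) ?_
  simpa using Nat.lt_succ_iff.mp (Finset.mem_range.mp hi)

/-- coefficient extraction for the hypergeometric-type operator -/
lemma coeff_ode (f : ℂ[X]) (A B D : ℂ) (k : ℕ) :
    (X*(1+X)*(derivative (derivative f)) + (C A * X + C B) * derivative f + C D * f).coeff k
      = ((k:ℂ)+1)*((k:ℂ)+B)*(f.coeff (k+1)) + ((k:ℂ)*((k:ℂ)-1) + A*(k:ℂ) + D)*(f.coeff k) := by
  have expand : X*(1+X)*(derivative (derivative f)) + (C A * X + C B) * derivative f + C D * f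
      = X*(derivative (derivative f)) + X*(X*(derivative (derivative f)))
        + C A * (X * derivative f) + C B * derivative f + C D * f := by ring
  rw [expand]
  rcases k with _ | k
  · simp only [coeff_add, mul_coeff_zero, coeff_X_zero, zero_mul, coeff_C_mul,
      coeff_derivative, Nat.cast_zero, coeff_C_zero]
    ring
  · rcases k with _ | k
    · simp only [coeff_add, coeff_X_mul, mul_coeff_zero, coeff_X_zero, zero_mul,
        coeff_C_mul, coeff_derivative, Nat.cast_one]
      ring
    · simp only [coeff_add, coeff_X_mul, coeff_C_mul, coeff_derivative]
      push_cast
      ring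


def qpoly (m n : ℕ) : ℂ[X] := cpoly (qc m n) m
def ppoly (m n : ℕ) : ℂ[X] := cpoly (pcc m n) m

lemma coeff_qpoly (m n k : ℕ) : (qpoly m n).coeff k = qc m n k :=
  coeff_cpoly _ _ (qc_zero m n) k

lemma coeff_ppoly (m n k : ℕ) : (ppoly m n).coeff k = pcc m n k :=
  coeff_cpoly _ _ (pcc_zero m n) k

lemma ode_q (m n : ℕ) :
    X*(1+X)*(derivative (derivative (qpoly m n)))
      + (C ((n:ℂ)-2*(m:ℂ)+1) * X + C (-(2*(m:ℂ)))) * derivative (qpoly m n)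
      + C (-((m:ℂ)*((n:ℂ)-(m:ℂ)))) * (qpoly m n) = 0 := by
  ext k
  rw [coeff_ode, coeff_qpoly, coeff_qpoly, coeff_zero]
  linear_combination -(qc_rec m n k)

/-- the transformed hypergeometric operator identity -/
lemma op_ident (m n'' : ℕ) (q : ℂ[X]) :
    X*(1+X)*(derivative (derivative ((1+X)^(n''+2) * q)))
      + (C ((1:ℂ) - ((n''+2:ℕ):ℂ) - 2*(m:ℂ)) * X + C (-(2*(m:ℂ)))) * derivative ((1+X)^(n''+2)*q)
      + C ((m:ℂ)*(((n''+2:ℕ):ℂ)+(m:ℂ))) * ((1+X)^(n''+2)*q)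
    = (1+X)^(n''+2) * (X*(1+X)*(derivative (derivative q))
      + (C (((n''+2:ℕ):ℂ)-2*(m:ℂ)+1) * X + C (-(2*(m:ℂ)))) * derivative q
      + C (-((m:ℂ)*(((n''+2:ℕ):ℂ)-(m:ℂ)))) * q) := by
  have h1 : derivative ((1+X : ℂ[X])^(n''+2)) = C ((n''+2:ℕ):ℂ) * (1+X)^(n''+1) := by
    rw [derivative_pow]
    simp
  simp only [derivative_mul, h1, derivative_pow, derivative_add, derivative_one, derivative_X,
    zero_add, mul_one]
  simp only [map_sub, map_add, map_mul, map_one, map_ofNat, map_natCast, map_neg]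
  push_cast
  simp only [derivative_add, derivative_natCast, derivative_ofNat, zero_add, zero_mul, add_zero]
  rw [show (1+X : ℂ[X])^(n''+2) = (1+X)^(n'')*(1+X)*(1+X) by ring,
     show (1+X : ℂ[X])^(n''+1) = (1+X)^(n'')*(1+X) by ring]
  ring


lemma ode_y (m n'' : ℕ) :
    X*(1+X)*(derivative (derivative ((1+X)^(n''+2) * qpoly m (n''+2))))
      + (C ((1:ℂ) - ((n''+2:ℕ):ℂ) - 2*(m:ℂ)) * X + C (-(2*(m:ℂ)))) * derivative ((1+X)^(n''+2) * qpoly m (n''+2))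
      + C ((m:ℂ)*(((n''+2:ℕ):ℂ)+(m:ℂ))) * ((1+X)^(n''+2) * qpoly m (n''+2)) = 0 := by
  rw [op_ident m n'' (qpoly m (n''+2)), ode_q m (n''+2), mul_zero]

lemma yrec (m n'' : ℕ) (k : ℕ) :
    (((k:ℂ)+1)*(2*(m:ℂ)-(k:ℂ))) * ((1+X)^(n''+2) * qpoly m (n''+2)).coeff (k+1)
      = (((m:ℂ)-(k:ℂ))*(((n''+2:ℕ):ℂ)+(m:ℂ)-(k:ℂ))) * ((1+X)^(n''+2) * qpoly m (n''+2)).coeff k := by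
  have h := ode_y m n''
  have h2 := congrArg (fun p => Polynomial.coeff p k) h
  simp only [coeff_zero] at h2
  rw [coeff_ode] at h2
  linear_combination -h2

lemma ycoeff_zero (m n'' : ℕ) : ((1+X)^(n''+2) * qpoly m (n''+2)).coeff 0 = 1 := by
  rw [coeff_zero_eq_eval_zero]
  simp only [eval_mul, eval_pow, eval_add, eval_one, eval_X, add_zero, one_pow, one_mul]
  rw [← coeff_zero_eq_eval_zero, coeff_qpoly]
  rfl

lemma claimA_coeff (m n'' : ℕ) : ∀ d, d ≤ 2*m →
    ((1+X)^(n''+2) * qpoly m (n''+2)).coeff d = pcc m (n''+2) d := by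
  intro d hd
  induction d with
  | zero => rw [ycoeff_zero]; rfl
  | succ k ih =>
    have hk : k < 2*m := by omega
    have e1 := yrec m n'' k
    have e2 := pcc_rec m (n''+2) k
    rw [ih (by omega)] at e1
    have hden : (((k:ℂ)+1)*(2*(m:ℂ)-(k:ℂ))) ≠ 0 :=
      mul_ne_zero (den1_ne_zero k) (den2_ne_zero hk)
    exact mul_left_cancel₀ hden (e1.trans e2.symm)

lemma claimA (m n'' : ℕ) :
    (X:ℂ[X])^(2*m+1) ∣ (1+X)^(n''+2) * qpoly m (n''+2) - ppoly m (n''+2) := by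
  rw [X_pow_dvd_iff]
  intro d hd
  rw [coeff_sub, claimA_coeff m n'' d (by omega), coeff_ppoly, sub_self]


lemma natDegree_qpoly (m n : ℕ) : (qpoly m n).natDegree ≤ m := natDegree_cpoly _ _

lemma natDegree_ppoly (m n : ℕ) : (ppoly m n).natDegree ≤ m := natDegree_cpoly _ _

lemma eval_zero_qpoly (m n : ℕ) : (qpoly m n).eval 0 = 1 := by
  rw [← coeff_zero_eq_eval_zero, coeff_qpoly]; rfl

lemma eval_zero_ppoly (m n : ℕ) : (ppoly m n).eval 0 = 1 := by
  rw [← coeff_zero_eq_eval_zero, coeff_ppoly]; rfl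
lemma reflect_sub (N : ℕ) (f g : ℂ[X]) : reflect N (f - g) = reflect N f - reflect N g := by
  ext i
  simp only [coeff_reflect, coeff_sub]

lemma reflect_pow (f : ℂ[X]) (N : ℕ) (hf : f.natDegree ≤ N) (k : ℕ) :
    reflect (k*N) (f^k) = (reflect N f)^k := by
  induction k with
  | zero => simp [pow_zero]
  | succ k ih =>
    have h1 : (f^k).natDegree ≤ k*N := natDegree_pow_le.trans (by nlinarith)
    rw [pow_succ, show (k+1)*N = k*N + N by ring, reflect_mul _ _ h1 hf, ih, pow_succ]

lemma natDegree_reflect_le (f : ℂ[X]) (N : ℕ) (hf : f.natDegree ≤ N) :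
    (reflect N f).natDegree ≤ N := by
  rw [natDegree_le_iff_coeff_eq_zero]
  intro i hi
  rw [coeff_reflect, revAt_eq_self_of_lt hi]
  exact coeff_eq_zero_of_natDegree_lt (lt_of_le_of_lt hf hi)

lemma eval_one_reflect (f : ℂ[X]) (N : ℕ) (hf : f.natDegree ≤ N) :
    (reflect N f).eval 1 = f.eval 1 := by
  rw [eval_eq_sum_range' (lt_of_le_of_lt (natDegree_reflect_le f N hf) (Nat.lt_succ_self N)),
      eval_eq_sum_range' (lt_of_le_of_lt hf (Nat.lt_succ_self N))]
  simp only [one_pow, mul_one, coeff_reflect]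
  have step : ∀ i ∈ Finset.range (N+1), f.coeff ((revAt N) i) = f.coeff (N+1-1-i) := by
    intro i hi
    have hi' : i ≤ N := by simpa [Nat.lt_succ_iff] using hi
    rw [revAt_le hi']
    norm_num
  rw [Finset.sum_congr rfl step, Finset.sum_range_reflect (fun i => f.coeff i) (N+1)]

variable (m n : ℕ)

def Qz (m n : ℕ) : ℂ[X] := (qpoly m n).comp (X - C 1)
def Pz (m n : ℕ) : ℂ[X] := (ppoly m n).comp (X - C 1)
def Fpoly (m n : ℕ) : ℂ[X] := reflect m (Qz m n) + Pz m n
def Gpoly (m n : ℕ) : ℂ[X] := Fpoly m n - X^n * (Qz m n + reflect m (Pz m n))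

lemma natDegree_Qz : (Qz m n).natDegree ≤ m := by
  refine natDegree_comp_le.trans ?_
  rw [natDegree_X_sub_C, mul_one]
  exact natDegree_qpoly m n

lemma natDegree_Pz : (Pz m n).natDegree ≤ m := by
  refine natDegree_comp_le.trans ?_
  rw [natDegree_X_sub_C, mul_one]
  exact natDegree_ppoly m n

lemma eval_one_Qz : (Qz m n).eval 1 = 1 := by
  rw [Qz, eval_comp]; simpa using eval_zero_qpoly m n

lemma eval_one_Pz : (Pz m n).eval 1 = 1 := by
  rw [Pz, eval_comp]; simpa using eval_zero_ppoly m n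

lemma eval_one_Fpoly : (Fpoly m n).eval 1 = 2 := by
  rw [Fpoly, eval_add, eval_one_reflect _ _ (natDegree_Qz m n), eval_one_Qz, eval_one_Pz]
  norm_num

lemma natDegree_Fpoly : (Fpoly m n).natDegree ≤ m :=
  (natDegree_add_le _ _).trans (max_le (natDegree_reflect_le _ _ (natDegree_Qz m n)) (natDegree_Pz m n))

lemma reflect_reflect (f : ℂ[X]) (N : ℕ) (hf : f.natDegree ≤ N) :
    reflect N (reflect N f) = f := by
  ext i
  rw [coeff_reflect, coeff_reflect, revAt_invol]

lemma reflect_Fpoly : reflect m (Fpoly m n) = Qz m n + reflect m (Pz m n) := by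
  rw [Fpoly, reflect_add, reflect_reflect _ _ (natDegree_Qz m n)]


lemma one_add_X_comp : ((1+X : ℂ[X])).comp (X - C 1) = X := by
  simp [add_comp]

lemma dvd_E (m n'' : ℕ) :
    (X - C 1 : ℂ[X])^(2*m+1) ∣ (X^(n''+2) * Qz m (n''+2) - Pz m (n''+2)) := by
  obtain ⟨T, hT⟩ := claimA m n''
  refine ⟨T.comp (X - C 1), ?_⟩
  have h := congrArg (fun p : ℂ[X] => p.comp (X - C 1)) hT
  simp only [sub_comp, mul_comp, pow_comp, X_comp] at h
  rw [one_add_X_comp] at h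
  exact h

lemma natDegree_E (m n'' : ℕ) :
    (X^(n''+2) * Qz m (n''+2) - Pz m (n''+2)).natDegree ≤ (n''+2)+m := by
  refine (natDegree_sub_le _ _).trans (max_le ?_ ?_)
  · refine natDegree_mul_le.trans ?_
    rw [natDegree_X_pow]
    exact Nat.add_le_add_left (natDegree_Qz m (n''+2)) _
  · exact (natDegree_Pz m (n''+2)).trans (by omega)

lemma reflect_E (m n'' : ℕ) :
    reflect ((n''+2)+m) (X^(n''+2) * Qz m (n''+2) - Pz m (n''+2))
      = reflect m (Qz m (n''+2)) - X^(n''+2) * reflect m (Pz m (n''+2)) := by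
  rw [reflect_sub]
  congr 1
  · rw [reflect_mul (X^(n''+2)) (Qz m (n''+2)) (natDegree_X_pow _).le (natDegree_Qz m (n''+2)),
        reflect_monomial, revAt_le (le_refl _), Nat.sub_self, pow_zero, one_mul]
  · rw [show (Pz m (n''+2)) = 1 * Pz m (n''+2) by ring,
        reflect_mul 1 (Pz m (n''+2)) (by simp : (1:ℂ[X]).natDegree ≤ n''+2) (natDegree_Pz m (n''+2))]
    congr 1
    · rw [show (1:ℂ[X]) = C 1 by simp, reflect_C, map_one, one_mul]
    · rw [show (1:ℂ[X]) * Pz m (n''+2) = Pz m (n''+2) by ring]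

lemma reflect_pow' (f : ℂ[X]) (hf : f.natDegree ≤ 1) (k : ℕ) :
    reflect k (f^k) = (reflect 1 f)^k := by
  simpa using reflect_pow f 1 hf k

lemma reflect_one_X_sub_C : reflect 1 (X - C 1 : ℂ[X]) = 1 - X := by
  rw [reflect_sub, show (X : ℂ[X]) = X^1 by ring, reflect_monomial, reflect_C]
  simp

lemma dvd_G (m n'' : ℕ) (hm : m ≤ n''+1) :
    ∃ S : ℂ[X], Gpoly m (n''+2) = (X - C 1)^(2*m+1) * S ∧ S.natDegree ≤ n''+1-m := by
  obtain ⟨S, hS⟩ := dvd_E m n''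
  set E := X^(n''+2) * Qz m (n''+2) - Pz m (n''+2) with hE
  rcases eq_or_ne S 0 with h0 | h0
  · -- then E = 0 and G = reflect E - E = 0
    rw [h0, mul_zero] at hS
    refine ⟨0, ?_, by simp⟩
    have hG : Gpoly m (n''+2) = reflect ((n''+2)+m) E - E := by
      rw [reflect_E, Gpoly, Fpoly, hE]
      ring
    rw [hG, hS]
    simp
  · have hXC : ((X - C 1 : ℂ[X])^(2*m+1)) ≠ 0 := pow_ne_zero _ (X_sub_C_ne_zero 1)
    have hEne : E ≠ 0 := by
      rw [hS]
      exact mul_ne_zero hXC h0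
    have hdegE : E.natDegree = (2*m+1) + S.natDegree := by
      rw [hS, natDegree_mul hXC h0, natDegree_pow, natDegree_X_sub_C, mul_one]
    have hdegS : S.natDegree ≤ n''+1-m := by
      have h1 := natDegree_E m n''
      rw [hdegE] at h1
      omega
    refine ⟨- reflect (n''+1-m) S - S, ?_, ?_⟩
    · have hsplit : (n''+2)+m = (2*m+1) + (n''+1-m) := by omega
      have hrefl : reflect ((n''+2)+m) E
          = (1-X)^(2*m+1) * reflect (n''+1-m) S := by
        rw [hS, hsplit, reflect_mul _ _ (by
              rw [natDegree_pow, natDegree_X_sub_C, mul_one] : ((X - C 1:ℂ[X])^(2*m+1)).natDegree ≤ 2*m+1) hdegS,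
            reflect_pow' _ (le_of_eq (natDegree_X_sub_C 1)) _,
            reflect_one_X_sub_C]
      have hG : Gpoly m (n''+2) = reflect ((n''+2)+m) E - E := by
        rw [reflect_E, Gpoly, Fpoly, hE]
        ring
      rw [hG, hrefl, hS, show ((1:ℂ[X])-X) = -(X - C 1) by simp, Odd.neg_pow ⟨m, by ring⟩]
      ring
    · refine (natDegree_sub_le _ _).trans (max_le ?_ hdegS)
      rw [natDegree_neg]
      exact natDegree_reflect_le _ _ hdegS

end Univariate

section Bivariate

abbrev R2 := MvPolynomial (Fin 2) ℂ

/-- homogenization map: `F(z) ↦ ∑ F_j v^j u^(N-j)` -/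
def Hh (u v : R2) (N : ℕ) (F : Polynomial ℂ) : R2 :=
  ∑ j ∈ Finset.range (N+1), MvPolynomial.C (F.coeff j) * v^j * u^(N-j)

variable (u v : R2)

lemma Hh_add (N : ℕ) (F G : Polynomial ℂ) :
    Hh u v N (F + G) = Hh u v N F + Hh u v N G := by
  simp only [Hh, Polynomial.coeff_add, map_add, add_mul, Finset.sum_add_distrib]

lemma Hh_sub (N : ℕ) (F G : Polynomial ℂ) :
    Hh u v N (F - G) = Hh u v N F - Hh u v N G := by
  simp only [Hh, Polynomial.coeff_sub, map_sub, sub_mul, Finset.sum_sub_distrib]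

lemma Hh_C_mul (N : ℕ) (c : ℂ) (F : Polynomial ℂ) :
    Hh u v N (Polynomial.C c * F) = MvPolynomial.C c * Hh u v N F := by
  simp only [Hh, Polynomial.coeff_C_mul, map_mul, Finset.mul_sum]
  apply Finset.sum_congr rfl
  intros; ring

lemma Hh_zero (N : ℕ) : Hh u v N 0 = 0 := by
  simp [Hh]

lemma Hh_pad (N : ℕ) (F : Polynomial ℂ) (hF : F.natDegree ≤ N) :
    Hh u v (N+1) F = u * Hh u v N F := by
  rw [Hh, Finset.sum_range_succ, Polynomial.coeff_eq_zero_of_natDegree_lt (by omega), map_zero,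
      zero_mul, zero_mul, add_zero, Hh, Finset.mul_sum]
  apply Finset.sum_congr rfl
  intro j hj
  have hj' : j ≤ N := Nat.lt_succ_iff.mp (Finset.mem_range.mp hj)
  rw [show N+1-j = (N-j)+1 by omega, pow_succ]
  ring

lemma Hh_pad_iter (N e : ℕ) (F : Polynomial ℂ) (hF : F.natDegree ≤ N) :
    Hh u v (N+e) F = u^e * Hh u v N F := by
  induction e with
  | zero => simp
  | succ e ih =>
    rw [show N+(e+1) = (N+e)+1 by omega, Hh_pad u v _ F (hF.trans (by omega)), ih, pow_succ]
    ring

lemma Hh_shift (N : ℕ) (F : Polynomial ℂ) :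
    Hh u v (N+1) (Polynomial.X * F) = v * Hh u v N F := by
  rw [Hh, Finset.sum_range_succ', Hh, Finset.mul_sum]
  simp only [Polynomial.coeff_X_mul]
  rw [Polynomial.mul_coeff_zero, Polynomial.coeff_X_zero, zero_mul, map_zero, zero_mul, zero_mul,
      add_zero]
  apply Finset.sum_congr rfl
  intro j hj
  rw [show N+1-(j+1) = N-j by omega, pow_succ]
  ring

lemma Hh_shift_iter (N d : ℕ) (F : Polynomial ℂ) :
    Hh u v (N+d) (Polynomial.X^d * F) = v^d * Hh u v N F := by
  induction d with
  | zero => simp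
  | succ d ih =>
    rw [show N+(d+1) = (N+d)+1 by omega, pow_succ, show Polynomial.X^d*Polynomial.X*F
          = Polynomial.X*(Polynomial.X^d*F) by ring, Hh_shift, ih]
    ring

lemma Hh_monomial (N d : ℕ) (c : ℂ) (hd : d ≤ N) :
    Hh u v N (Polynomial.C c * Polynomial.X^d) = MvPolynomial.C c * v^d * u^(N-d) := by
  rw [Hh, Finset.sum_eq_single d]
  · simp [Polynomial.coeff_C_mul, Polynomial.coeff_X_pow]
  · intro b _ hb
    rw [Polynomial.coeff_C_mul, Polynomial.coeff_X_pow, if_neg hb, mul_zero, map_zero,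
        zero_mul, zero_mul]
  · intro hd'
    exact absurd (Finset.mem_range.mpr (by omega)) hd'

lemma Hh_mul (N₁ N₂ : ℕ) (F G : Polynomial ℂ) (hF : F.natDegree ≤ N₁) (hG : G.natDegree ≤ N₂) :
    Hh u v (N₁+N₂) (F * G) = Hh u v N₁ F * Hh u v N₂ G := by
  revert G
  refine Polynomial.induction_with_natDegree_le
    (fun G => Hh u v (N₁+N₂) (F * G) = Hh u v N₁ F * Hh u v N₂ G) N₂ ?_ ?_ ?_
  · show Hh u v (N₁+N₂) (F * 0) = Hh u v N₁ F * Hh u v N₂ 0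
    rw [mul_zero, Hh_zero, Hh_zero, mul_zero]
  · intro d c hc hd
    show Hh u v (N₁+N₂) (F * (Polynomial.C c * Polynomial.X^d)) = _
    rw [show F * (Polynomial.C c * Polynomial.X^d) = Polynomial.C c * (Polynomial.X^d * F) by ring,
        Hh_C_mul, show N₁+N₂ = (N₁+d) + (N₂-d) by omega,
        Hh_pad_iter u v _ _ _ (by
          refine Polynomial.natDegree_mul_le.trans ?_
          rw [Polynomial.natDegree_X_pow]
          omega),
        Hh_shift_iter, Hh_monomial u v _ _ _ hd]
    ring
  · intro f g _ _ hf hg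
    show Hh u v (N₁+N₂) (F * (f + g)) = _
    rw [mul_add, Hh_add, hf, hg, Hh_add, mul_add]

lemma Hh_pow (k : ℕ) (F : Polynomial ℂ) (hF : F.natDegree ≤ 1) :
    Hh u v k (F^k) = (Hh u v 1 F)^k := by
  induction k with
  | zero =>
    rw [pow_zero, pow_zero, show (1:Polynomial ℂ) = Polynomial.C 1 * Polynomial.X^0 by simp,
        Hh_monomial u v 0 0 1 (le_refl 0)]
    simp
  | succ k ih =>
    rw [pow_succ,
        Hh_mul u v k 1 _ _ (Polynomial.natDegree_pow_le.trans
          (by simpa using Nat.mul_le_mul_left k hF)) hF, ih, pow_succ]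

lemma Hh_swap_reflect (N : ℕ) (F : Polynomial ℂ) :
    Hh v u N F = Hh u v N (Polynomial.reflect N F) := by
  rw [Hh, Hh]
  rw [← Finset.sum_range_reflect (fun j => MvPolynomial.C (F.coeff j) * u^j * v^(N-j)) (N+1)]
  apply Finset.sum_congr rfl
  intro j hj
  have hj' : j ≤ N := Nat.lt_succ_iff.mp (Finset.mem_range.mp hj)
  rw [Polynomial.coeff_reflect, Polynomial.revAt_le hj']
  rw [show N+1-1-j = N-j by omega, show N-(N-j) = j by omega]
  ring


end Bivariate
end
end Stmt13

open MvPolynomial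

/-- For `f = ∏ i (x − a_i)^{b_i}`, the numerator `g(x) = ∏_{i : b_i > 0} (x − a_i)^{b_i}`,
as a polynomial in the variable `X v` of `ℂ[x,y]`. -/
noncomputable def numerAt {r : ℕ} (a : Fin r → ℂ) (b : Fin r → ℤ) (v : Fin 2) :
    MvPolynomial (Fin 2) ℂ :=
  ∏ i ∈ Finset.univ.filter (fun i => 0 < b i), (X v - MvPolynomial.C (a i)) ^ (b i).toNat

/-- For `f = ∏ i (x − a_i)^{b_i}`, the denominator `h(x) = ∏_{i : b_i < 0} (x − a_i)^{−b_i}`,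
as a polynomial in the variable `X v` of `ℂ[x,y]`. -/
noncomputable def denomAt {r : ℕ} (a : Fin r → ℂ) (b : Fin r → ℤ) (v : Fin 2) :
    MvPolynomial (Fin 2) ℂ :=
  ∏ i ∈ Finset.univ.filter (fun i => b i < 0), (X v - MvPolynomial.C (a i)) ^ (-(b i)).toNat

/-- `F ∈ Q_m(f)` for `f = g/h = ∏ i (x − a_i)^{b_i}`: the divisibility
`(x − y)^{2m+1} ∣ g(x)h(y)F(x,y) − g(y)h(x)F(y,x)` holds in `ℂ[x,y]`. -/
def MemQalg {r : ℕ} (a : Fin r → ℂ) (b : Fin r → ℤ) (m : ℕ)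
    (F : MvPolynomial (Fin 2) ℂ) : Prop :=
  (X 0 - X 1) ^ (2 * m + 1) ∣
    numerAt a b 0 * denomAt a b 1 * F
      - numerAt a b 1 * denomAt a b 0 * rename (Equiv.swap (0 : Fin 2) 1) F

/-- The restriction of `F ∈ ℂ[x,y]` to the diagonal, i.e., the one-variable
polynomial `F(x,x)`. -/
noncomputable def diag (F : MvPolynomial (Fin 2) ℂ) : Polynomial ℂ :=
  MvPolynomial.aeval (fun _ : Fin 2 => (Polynomial.X : Polynomial ℂ)) F



namespace Stmt13

/-- the swap of the two variables -/
noncomputable def sw : MvPolynomial (Fin 2) ℂ →ₐ[ℂ] MvPolynomial (Fin 2) ℂ :=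
  rename (Equiv.swap (0:Fin 2) 1)

noncomputable def uu (α : ℂ) : R2 := X 0 - C α
noncomputable def vv (α : ℂ) : R2 := X 1 - C α

lemma sw_C (c : ℂ) : sw (C c) = C c := by simp [sw]

lemma sw_uu (α : ℂ) : sw (uu α) = vv α := by
  simp [sw, uu, vv, rename_X]

lemma sw_vv (α : ℂ) : sw (vv α) = uu α := by
  simp [sw, uu, vv, rename_X]

lemma sw_sw (p : R2) : sw (sw p) = p := by
  show rename _ (rename _ p) = p
  rw [rename_rename]
  have : (Equiv.swap (0:Fin 2) 1) ∘ (Equiv.swap (0:Fin 2) 1) = id := by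
    funext i
    simp [Equiv.swap_apply_self]
  rw [this, rename_id, AlgHom.id_apply]

lemma sw_Hh (α : ℂ) (N : ℕ) (F : Polynomial ℂ) :
    sw (Hh (uu α) (vv α) N F) = Hh (vv α) (uu α) N F := by
  rw [Hh, Hh, map_sum]
  refine Finset.sum_congr rfl fun j hj => ?_
  rw [map_mul, map_mul, map_pow, map_pow, sw_uu, sw_vv, sw_C]

lemma diag_C (c : ℂ) : diag (C c) = Polynomial.C c := by
  simp [diag]

lemma diag_mul (p q : R2) : diag (p * q) = diag p * diag q := by
  rw [diag, diag, diag, map_mul]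

lemma diag_pow (p : R2) (k : ℕ) : diag (p ^ k) = (diag p) ^ k := by
  rw [diag, diag, map_pow]

lemma diag_one : diag (1 : R2) = 1 := by
  rw [diag, map_one]

lemma diag_uu (α : ℂ) : diag (uu α) = Polynomial.X - Polynomial.C α := by
  simp [diag, uu]

lemma diag_vv (α : ℂ) : diag (vv α) = Polynomial.X - Polynomial.C α := by
  simp [diag, vv]

lemma diag_Hh (α : ℂ) (N : ℕ) (F : Polynomial ℂ) (hF : F.natDegree ≤ N) :
    diag (Hh (uu α) (vv α) N F)
      = Polynomial.C (Polynomial.eval 1 F) * (Polynomial.X - Polynomial.C α)^N := by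
  show MvPolynomial.aeval _ _ = _
  rw [Hh, map_sum]
  have step : ∀ j ∈ Finset.range (N+1),
      MvPolynomial.aeval (fun _ : Fin 2 => (Polynomial.X : Polynomial ℂ))
        (C (F.coeff j) * (vv α)^j * (uu α)^(N-j))
      = Polynomial.C (F.coeff j) * (Polynomial.X - Polynomial.C α)^N := by
    intro j hj
    have hj' : j ≤ N := Nat.lt_succ_iff.mp (Finset.mem_range.mp hj)
    rw [map_mul, map_mul, map_pow, map_pow, aeval_C]
    have h1 : MvPolynomial.aeval (fun _ : Fin 2 => (Polynomial.X : Polynomial ℂ)) (uu α)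
        = Polynomial.X - Polynomial.C α := by
      rw [uu, map_sub, aeval_X, aeval_C]
      rfl
    have h2 : MvPolynomial.aeval (fun _ : Fin 2 => (Polynomial.X : Polynomial ℂ)) (vv α)
        = Polynomial.X - Polynomial.C α := by
      rw [vv, map_sub, aeval_X, aeval_C]
      rfl
    rw [h1, h2, mul_assoc, ← pow_add, show j + (N-j) = N by omega]
    rfl
  rw [Finset.sum_congr rfl step, ← Finset.sum_mul]
  congr 1
  rw [Polynomial.eval_eq_sum_range' (lt_of_le_of_lt hF (Nat.lt_succ_self N)) 1, map_sum]
  refine Finset.sum_congr rfl fun j hj => ?_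
  rw [one_pow, mul_one]

lemma factor_pos (m n : ℕ) (hm : 1 ≤ m) (hn : m < n) (α : ℂ) :
    ∃ p : MvPolynomial (Fin 2) ℂ,
      ((X 0 - X 1 : R2)^(2*m+1) ∣ (uu α)^n * p - sw ((uu α)^n * p))
      ∧ diag p = (Polynomial.X - Polynomial.C α)^(min m n) := by
  obtain ⟨n'', rfl⟩ : ∃ n'', n = n''+2 := ⟨n-2, by omega⟩
  refine ⟨C (2⁻¹:ℂ) * Hh (uu α) (vv α) m (Fpoly m (n''+2)), ?_, ?_⟩
  · have hsw : sw ((uu α)^(n''+2) * (C (2⁻¹:ℂ) * Hh (uu α) (vv α) m (Fpoly m (n''+2))))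
        = (vv α)^(n''+2) * (C (2⁻¹:ℂ)
            * Hh (uu α) (vv α) m (Polynomial.reflect m (Fpoly m (n''+2)))) := by
      rw [map_mul, map_mul, map_pow, sw_uu, sw_C, sw_Hh, Hh_swap_reflect]
    rw [hsw]
    have e1 : (uu α)^(n''+2) * (C (2⁻¹:ℂ) * Hh (uu α) (vv α) m (Fpoly m (n''+2)))
        = C (2⁻¹:ℂ) * Hh (uu α) (vv α) (m+(n''+2)) (Fpoly m (n''+2)) := by
      rw [Hh_pad_iter _ _ m (n''+2) _ (natDegree_Fpoly m (n''+2))]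
      ring
    have e2 : (vv α)^(n''+2) * (C (2⁻¹:ℂ)
            * Hh (uu α) (vv α) m (Polynomial.reflect m (Fpoly m (n''+2))))
        = C (2⁻¹:ℂ) * Hh (uu α) (vv α) (m+(n''+2))
            (Polynomial.X^(n''+2) * (Qz m (n''+2) + Polynomial.reflect m (Pz m (n''+2)))) := by
      rw [reflect_Fpoly, Hh_shift_iter]
      ring
    rw [e1, e2, ← mul_sub, ← Hh_sub]
    rw [show Fpoly m (n''+2) - Polynomial.X^(n''+2)
            * (Qz m (n''+2) + Polynomial.reflect m (Pz m (n''+2))) = Gpoly m (n''+2) from rfl]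
    obtain ⟨S, hS, hSdeg⟩ := dvd_G m n'' (by omega)
    have hdegpow : ((Polynomial.X - Polynomial.C 1 : Polynomial ℂ)^(2*m+1)).natDegree ≤ 2*m+1 := by
      rw [Polynomial.natDegree_pow, Polynomial.natDegree_X_sub_C, mul_one]
    rw [hS, show m+(n''+2) = (2*m+1)+(n''+1-m) by omega,
        Hh_mul _ _ _ _ _ _ hdegpow hSdeg,
        Hh_pow _ _ _ _ (le_of_eq (Polynomial.natDegree_X_sub_C 1))]
    have hH1 : Hh (uu α) (vv α) 1 (Polynomial.X - Polynomial.C 1) = vv α - uu α := by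
      rw [show (Polynomial.X - Polynomial.C 1 : Polynomial ℂ)
            = (Polynomial.C 1 * Polynomial.X^1) - (Polynomial.C 1 * Polynomial.X^0) by simp,
          Hh_sub, Hh_monomial _ _ 1 1 1 (le_refl 1), Hh_monomial _ _ 1 0 1 (by omega)]
      simp
    rw [hH1, show vv α - uu α = -(X 0 - X 1 : R2) by rw [uu, vv]; ring,
        Odd.neg_pow ⟨m, by ring⟩]
    exact ⟨C (2⁻¹:ℂ) * -(Hh (uu α) (vv α) (n''+1-m) S), by ring⟩
  · rw [diag_mul, diag_C, diag_Hh _ _ _ (natDegree_Fpoly m (n''+2)), eval_one_Fpoly,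
        show min m (n''+2) = m from min_eq_left (by omega), ← mul_assoc, ← Polynomial.C_mul]
    norm_num

lemma pos_any (m n : ℕ) (α : ℂ) :
    ∃ p : MvPolynomial (Fin 2) ℂ,
      ((X 0 - X 1 : R2)^(2*m+1) ∣ (uu α)^n * p - sw ((uu α)^n * p))
      ∧ diag p = (Polynomial.X - Polynomial.C α)^(min m n) := by
  rcases le_or_gt n m with h | h
  · refine ⟨(vv α)^n, ?_, ?_⟩
    · rw [map_mul, map_pow, map_pow, sw_uu, sw_vv]
      rw [show (uu α)^n * (vv α)^n - (vv α)^n * (uu α)^n = 0 by ring]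
      exact dvd_zero _
    · rw [diag_pow, diag_vv, min_eq_right h]
  · rcases Nat.eq_zero_or_pos m with hm | hm
    · subst hm
      refine ⟨1, ?_, ?_⟩
      · rw [map_mul, map_pow, sw_uu, map_one, mul_one, mul_one]
        rw [show 2*0+1 = 1 by ring, pow_one, show (X 0 - X 1 : R2) = uu α - vv α by rw [uu,vv]; ring]
        exact sub_dvd_pow_sub_pow _ _ n
      · rw [diag_one, min_eq_left (by omega), pow_zero]
    · exact factor_pos m n hm h α

lemma factor_full (m : ℕ) (α : ℂ) (bi : ℤ) :
    ∃ p : MvPolynomial (Fin 2) ℂ,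
      ((X 0 - X 1 : R2)^(2*m+1) ∣
        ((uu α)^(bi.toNat) * (vv α)^((-bi).toNat) * p
          - sw ((uu α)^(bi.toNat) * (vv α)^((-bi).toNat) * p)))
      ∧ diag p = (Polynomial.X - Polynomial.C α)^(min m bi.natAbs) := by
  rcases le_or_gt 0 bi with hb | hb
  · have h0 : (-bi).toNat = 0 := by omega
    have hnat : bi.natAbs = bi.toNat := by omega
    obtain ⟨p, hd, hdiag⟩ := pos_any m bi.toNat α
    refine ⟨p, ?_, ?_⟩
    · rw [h0, pow_zero, mul_one]
      exact hd
    · rw [hdiag, hnat]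
  · have h0 : bi.toNat = 0 := by omega
    have hnat : bi.natAbs = (-bi).toNat := by omega
    obtain ⟨p, hd, hdiag⟩ := pos_any m (-bi).toNat α
    refine ⟨sw p, ?_, ?_⟩
    · rw [h0, pow_zero, one_mul]
      have h2 : sw ((uu α)^((-bi).toNat) * p) = (vv α)^((-bi).toNat) * sw p := by
        rw [map_mul, map_pow, sw_uu]
      have h3 : sw ((vv α)^((-bi).toNat) * sw p) = (uu α)^((-bi).toNat) * p := by
        rw [map_mul, map_pow, sw_vv, sw_sw]
      rw [h3, ← h2]
      exact dvd_sub_comm.mp hd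
    · have : diag (sw p) = diag p := by
        show MvPolynomial.aeval _ (rename _ p) = _
        rw [aeval_rename]
        rfl
      rw [this, hdiag, hnat]

lemma prod_sub_prod_dvd {ι : Type*} (s : Finset ι) (d : R2) (f g : ι → R2)
    (h : ∀ i ∈ s, d ∣ f i - g i) : d ∣ (∏ i ∈ s, f i) - (∏ i ∈ s, g i) := by
  classical
  induction s using Finset.induction_on with
  | empty => simp
  | @insert x s hx ih =>
    rw [Finset.prod_insert hx, Finset.prod_insert hx]
    have h1 := h _ (Finset.mem_insert_self _ _)
    have h2 := ih (fun i hi => h i (Finset.mem_insert_of_mem hi))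
    have e : f x * ∏ i ∈ s, f i - g x * ∏ i ∈ s, g i
        = f x * ((∏ i ∈ s, f i) - ∏ i ∈ s, g i) + (f x - g x) * ∏ i ∈ s, g i := by ring
    rw [e]
    exact dvd_add (h2.mul_left _) (h1.mul_right _)

end Stmt13

section Assembly

open Stmt13

lemma numerAt_eq {r : ℕ} (a : Fin r → ℂ) (b : Fin r → ℤ) (v : Fin 2) :
    numerAt a b v = ∏ i : Fin r, (X v - MvPolynomial.C (a i)) ^ (b i).toNat := by
  rw [numerAt]
  refine Finset.prod_subset (Finset.filter_subset _ _) ?_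
  intro i _ hi
  have : (b i).toNat = 0 := by
    simp only [Finset.mem_filter, Finset.mem_univ, true_and, not_lt] at hi
    omega
  rw [this, pow_zero]

lemma denomAt_eq {r : ℕ} (a : Fin r → ℂ) (b : Fin r → ℤ) (v : Fin 2) :
    denomAt a b v = ∏ i : Fin r, (X v - MvPolynomial.C (a i)) ^ (-(b i)).toNat := by
  rw [denomAt]
  refine Finset.prod_subset (Finset.filter_subset _ _) ?_
  intro i _ hi
  have : (-(b i)).toNat = 0 := by
    simp only [Finset.mem_filter, Finset.mem_univ, true_and, not_lt] at hi
    omega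
  rw [this, pow_zero]

end Assembly

/-- for `f = ∏ i (x − a_i)^{b_i}` with the `a_i` pairwise distinct, there
exists `P ∈ Q_m(f)` with `P(x,x) = ∏ i (x − a_i)^{d_m(b_i)}`, where `d_m(b) = min(m, |b|)`. -/
theorem stmt13 (m : ℕ) (r : ℕ) (a : Fin r → ℂ) (b : Fin r → ℤ)
    (ha : Function.Injective a) :
    ∃ P : MvPolynomial (Fin 2) ℂ, MemQalg a b m P ∧
      diag P = ∏ i : Fin r, (Polynomial.X - Polynomial.C (a i)) ^ (min m (b i).natAbs) := by
  classical
  choose p hp hdiag using fun i : Fin r => Stmt13.factor_full m (a i) (b i)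
  refine ⟨∏ i : Fin r, p i, ?_, ?_⟩
  · rw [MemQalg]
    have key : numerAt a b 0 * denomAt a b 1 * ∏ i : Fin r, p i
        = ∏ i : Fin r, ((Stmt13.uu (a i))^((b i).toNat) * (Stmt13.vv (a i))^((-(b i)).toNat) * p i) := by
      rw [numerAt_eq, denomAt_eq, ← Finset.prod_mul_distrib, ← Finset.prod_mul_distrib]
      rfl
    have key2 : numerAt a b 1 * denomAt a b 0 * rename (Equiv.swap (0:Fin 2) 1) (∏ i : Fin r, p i)
        = ∏ i : Fin r,
            Stmt13.sw ((Stmt13.uu (a i))^((b i).toNat) * (Stmt13.vv (a i))^((-(b i)).toNat) * p i) := by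
      have hren : rename (Equiv.swap (0:Fin 2) 1) (∏ i : Fin r, p i)
          = ∏ i : Fin r, Stmt13.sw (p i) := by
        rw [show (rename (Equiv.swap (0:Fin 2) 1) : MvPolynomial (Fin 2) ℂ →ₐ[ℂ] MvPolynomial (Fin 2) ℂ) = Stmt13.sw from rfl, map_prod]
      rw [numerAt_eq, denomAt_eq, hren, ← Finset.prod_mul_distrib, ← Finset.prod_mul_distrib]
      refine Finset.prod_congr rfl fun i _ => ?_
      rw [map_mul, map_mul, map_pow, map_pow, Stmt13.sw_uu, Stmt13.sw_vv]
      show (X 1 - MvPolynomial.C (a i))^(b i).toNat * (X 0 - MvPolynomial.C (a i))^(-(b i)).toNat * _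
        = Stmt13.vv (a i) ^ (b i).toNat * Stmt13.uu (a i) ^ (-(b i)).toNat * _
      rfl
    rw [key, key2]
    exact Stmt13.prod_sub_prod_dvd _ _ _ _ (fun i _ => hp i)
  · show MvPolynomial.aeval _ _ = _
    rw [map_prod]
    exact Finset.prod_congr rfl fun i _ => hdiag i
end

section
/- Let m ≥ 0 and z ≥ 0 be integers. Then (x − y)^{2m+1} divides the polynomial Σ_{i=0}^m C(m−z, i)·C(m+z, m−i)·(x^{i+z}·y^{m−i} − x^{m−i}·y^{i+z}) in ℚ[x,y], where the generalized binomial coefficients are evaluated at the (possibly negative) integers m−z and m+z. -/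
open MvPolynomial

/-- The generalized binomial coefficient `C(w, j) = w(w−1)⋯(w−j+1)/j!` over `ℚ`. -/
def genChooseQ (w : ℚ) (j : ℕ) : ℚ :=
  (∏ k ∈ Finset.range j, (w - k)) / (j.factorial : ℚ)

/-!
Put `x = y + t`. Since `x^a y^b = Σ_d C(a,d) t^d y^(a+b-d)`, a homogeneous sum
`Σ c_i (x^(a_i) y^(b_i) - x^(b_i) y^(a_i))` is divisible by `t^N` as soon as the moments
`Σ c_i C(a_i,d)` and `Σ c_i C(b_i,d)` agree for `d < N`. For `c_i = C(m-z,i) C(m+z,m-i)` and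
`d ≤ 2m` both moments equal `C(m+z,d) C(2m-d,m)`: trinomial revision
`C(n,k) C(k,d) = C(n,d) C(n-d,k-d)` turns each of them into a Chu–Vandermonde convolution.
-/

open Finset

theorem genChooseQ_eq_choose (w : ℚ) (j : ℕ) : genChooseQ w j = Ring.choose w j := by
  rw [Ring.choose_eq_smul, genChooseQ, smul_eq_mul, ← Polynomial.aeval_eq_smeval,
    Polynomial.aeval_def, Polynomial.eval₂_eq_eval_map, descPochhammer_map,
    descPochhammer_eval_eq_prod_range, div_eq_inv_mul]

theorem Ring.choose_add_eq_sum_range {R : Type*} [CommRing R] [BinomialRing R] (r s : R) (n : ℕ) :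
    Ring.choose (r + s) n = ∑ i ∈ range (n + 1), Ring.choose r i * Ring.choose s (n - i) := by
  rw [Ring.add_choose_eq n (Commute.all r s), Finset.Nat.sum_antidiagonal_eq_sum_range_succ_mk]

theorem Nat.choose_sub_mul_choose_add {m i z d : ℕ} (hi : i ≤ m) :
    (m + z).choose (m - i) * (i + z).choose d = (m + z).choose d * (m + z - d).choose (m - i) := by
  by_cases hd : d ≤ i + z
  · rw [Nat.choose_symm_of_eq_add (show m + z = m - i + (i + z) by omega), Nat.choose_mul hd,
      Nat.choose_symm_of_eq_add (show m + z - d = i + z - d + (m - i) by omega)]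
  · rw [Nat.choose_eq_zero_of_lt (not_le.mp hd), mul_zero]
    rcases lt_or_ge (m + z) d with hmz | hmz
    · rw [Nat.choose_eq_zero_of_lt hmz, zero_mul]
    · rw [Nat.choose_eq_zero_of_lt (by omega : m + z - d < m - i), mul_zero]

section BinomialRing

variable {R : Type*} [CommRing R] [BinomialRing R]

theorem sum_choose_mul_choose_sub_mul_choose_add (a : R) (m z d : ℕ) :
    ∑ i ∈ range (m + 1), Ring.choose a i * (m + z).choose (m - i) * (i + z).choose d
      = (m + z).choose d * Ring.choose (a + (m + z - d : ℕ)) m := by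
  rw [Ring.choose_add_eq_sum_range, mul_sum]
  refine sum_congr rfl fun i hi => ?_
  rw [mul_assoc, ← Nat.cast_mul, Nat.choose_sub_mul_choose_add (by grind), Ring.choose_natCast]
  push_cast
  ring

theorem sum_choose_mul_choose_sub_mul_choose_sub (a : R) {m d : ℕ} (z : ℕ) (hd : d ≤ m) :
    ∑ i ∈ range (m + 1), Ring.choose a i * (m + z).choose (m - i) * (m - i).choose d
      = (m + z).choose d * Ring.choose (a + (m + z - d : ℕ)) (m - d) := by
  rw [Ring.choose_add_eq_sum_range, mul_sum,
    ← sum_subset (range_subset_range.mpr (by omega : m - d + 1 ≤ m + 1))]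
  · refine sum_congr rfl fun i hi => ?_
    have hi : i ≤ m - d := by grind
    rw [mul_assoc, ← Nat.cast_mul, Nat.choose_mul (by omega : d ≤ m - i), Ring.choose_natCast,
      show m - i - d = m - d - i by omega]
    push_cast
    ring
  · intro i hi hi'
    rw [Nat.choose_eq_zero_of_lt (by grind : m - i < d)]
    simp

theorem sum_choose_mul_choose_sub_mul_choose_add_eq_sub (m z : ℕ) {d : ℕ} (hd : d ≤ 2 * m) :
    ∑ i ∈ range (m + 1), Ring.choose ((m : R) - z) i * (m + z).choose (m - i) * (i + z).choose d
      = ∑ i ∈ range (m + 1), Ring.choose ((m : R) - z) i * (m + z).choose (m - i) *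
          (m - i).choose d := by
  have rhs_eq_zero (hdm : m < d) :
      ∑ i ∈ range (m + 1), Ring.choose ((m : R) - z) i * (m + z).choose (m - i) *
        (m - i).choose d = 0 :=
    sum_eq_zero fun i hi => by rw [Nat.choose_eq_zero_of_lt (by grind : m - i < d)]; simp
  rw [sum_choose_mul_choose_sub_mul_choose_add]
  rcases lt_or_ge (m + z) d with hmz | hmz
  · rw [Nat.choose_eq_zero_of_lt hmz, Nat.cast_zero, zero_mul, rhs_eq_zero (by omega)]
  have hcast : (m : R) - z + (m + z - d : ℕ) = (2 * m - d : ℕ) := by push_cast [hd, hmz]; ring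
  rcases le_or_gt d m with hdm | hdm
  · rw [sum_choose_mul_choose_sub_mul_choose_sub _ _ hdm, hcast, Ring.choose_natCast,
      Ring.choose_natCast, Nat.choose_symm_of_eq_add (show 2 * m - d = m + (m - d) by omega)]
  · rw [rhs_eq_zero hdm, hcast, Ring.choose_natCast,
      Nat.choose_eq_zero_of_lt (by omega : 2 * m - d < m), Nat.cast_zero, mul_zero]

end BinomialRing

section Shift

variable {R : Type*} [CommRing R]

/-- `p(x, y) ↦ p(y + T, y)`, with `T` the outer variable and `y` the inner one. -/
noncomputable def shiftX0 : MvPolynomial (Fin 2) R →ₐ[R] Polynomial (Polynomial R) :=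
  aeval ![Polynomial.X + Polynomial.C Polynomial.X, Polynomial.C Polynomial.X]

noncomputable def unshiftX0 : Polynomial (Polynomial R) →+* MvPolynomial (Fin 2) R :=
  Polynomial.eval₂RingHom (Polynomial.eval₂RingHom C (X 1)) (X 0 - X 1)

theorem unshiftX0_shiftX0 (p : MvPolynomial (Fin 2) R) : unshiftX0 (shiftX0 p) = p := by
  suffices unshiftX0.comp shiftX0.toRingHom = RingHom.id _ from RingHom.congr_fun this p
  refine MvPolynomial.ringHom_ext (fun r => by simp [shiftX0, unshiftX0]) fun i => ?_
  fin_cases i <;> simp [shiftX0, unshiftX0]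

theorem X_sub_X_pow_dvd_of_X_pow_dvd_shiftX0 {p : MvPolynomial (Fin 2) R} {N : ℕ}
    (h : Polynomial.X ^ N ∣ shiftX0 p) : (X 0 - X 1) ^ N ∣ p := by
  have := map_dvd unshiftX0 h
  rwa [unshiftX0_shiftX0, map_pow, unshiftX0, Polynomial.coe_eval₂RingHom,
    Polynomial.eval₂_X] at this

theorem coeff_shiftX0_X_pow_mul_X_pow (a b d : ℕ) :
    (shiftX0 (X 0 ^ a * X 1 ^ b : MvPolynomial (Fin 2) R)).coeff d
      = Polynomial.C (a.choose d : R) * Polynomial.X ^ (a + b - d) := by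
  rw [map_mul, map_pow, map_pow]
  simp only [shiftX0, aeval_X, Matrix.cons_val_zero, Matrix.cons_val_one]
  rw [← Polynomial.C_pow, Polynomial.coeff_mul_C, Polynomial.coeff_X_add_C_pow]
  rcases le_or_gt d a with hd | hd
  · rw [mul_comm, ← mul_assoc, ← pow_add, Polynomial.C_eq_natCast, mul_comm]
    congr 2
    omega
  · simp [Nat.choose_eq_zero_of_lt hd]

theorem X_sub_X_pow_dvd_of_sum_mul_choose_eq_zero {ι : Type*} (s : Finset ι) (c : ι → R)
    (a b : ι → ℕ) {n N : ℕ} (hab : ∀ i ∈ s, a i + b i = n)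
    (hc : ∀ d < N, ∑ i ∈ s, c i * (a i).choose d = 0) :
    (X 0 - X 1) ^ N ∣ ∑ i ∈ s, C (c i) * ((X 0 : MvPolynomial (Fin 2) R) ^ a i * X 1 ^ b i) := by
  apply X_sub_X_pow_dvd_of_X_pow_dvd_shiftX0
  rw [Polynomial.X_pow_dvd_iff]
  intro d hd
  simp only [C_mul', map_sum, map_smul, Polynomial.finsetSum_coeff, Polynomial.coeff_smul,
    coeff_shiftX0_X_pow_mul_X_pow]
  rw [sum_congr rfl fun i hi => by rw [hab i hi, ← smul_mul_assoc, Polynomial.smul_C, smul_eq_mul],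
    ← sum_mul, ← map_sum, hc d hd, map_zero, zero_mul]

theorem X_sub_X_pow_dvd_sum_sub_swap {ι : Type*} (s : Finset ι) (c : ι → R) (a b : ι → ℕ)
    {n N : ℕ} (hab : ∀ i ∈ s, a i + b i = n)
    (hc : ∀ d < N, ∑ i ∈ s, c i * (a i).choose d = ∑ i ∈ s, c i * (b i).choose d) :
    (X 0 - X 1) ^ N ∣ ∑ i ∈ s, C (c i) *
      ((X 0 : MvPolynomial (Fin 2) R) ^ a i * X 1 ^ b i - X 0 ^ b i * X 1 ^ a i) := by
  have := X_sub_X_pow_dvd_of_sum_mul_choose_eq_zero (s.disjSum s) (Sum.elim c (-c))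
    (Sum.elim a b) (Sum.elim b a) (n := n) (N := N)
    (by simpa [add_comm] using hab)
    (fun d hd => by simp [sum_disjSum, hc d hd])
  convert this using 1
  simp [sum_disjSum, mul_add, sum_add_distrib, sub_eq_add_neg]

end Shift

/-- for integers `m, z ≥ 0`, `(x − y)^{2m+1}` divides
`Σ_{i=0}^m C(m−z, i)·C(m+z, m−i)·(x^{i+z} y^{m−i} − x^{m−i} y^{i+z})` in `ℚ[x,y]`. -/
theorem stmt14 (m z : ℕ) :
    (X 0 - X 1) ^ (2 * m + 1) ∣
      ∑ i ∈ Finset.range (m + 1),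
        MvPolynomial.C (genChooseQ ((m : ℚ) - z) i * genChooseQ ((m : ℚ) + z) (m - i)) *
          ((X 0 : MvPolynomial (Fin 2) ℚ) ^ (i + z) * X 1 ^ (m - i)
            - X 0 ^ (m - i) * X 1 ^ (i + z)) := by
  have hcoeff (i : ℕ) : genChooseQ ((m : ℚ) - z) i * genChooseQ ((m : ℚ) + z) (m - i)
      = Ring.choose ((m : ℚ) - z) i * (m + z).choose (m - i) := by
    rw [genChooseQ_eq_choose, genChooseQ_eq_choose, ← Nat.cast_add, Ring.choose_natCast]
  simp_rw [hcoeff]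
  refine X_sub_X_pow_dvd_sum_sub_swap _ _ _ _ (n := m + z) (fun i hi => by grind) fun d hd => ?_
  simpa only [mul_assoc] using
    sum_choose_mul_choose_sub_mul_choose_add_eq_sub (R := ℚ) m z (by omega : d ≤ 2 * m)
end

section
/- Let m ≥ 1 and let f = ∏_i (x − a_i)^{b_i} with a_1,…,a_r ∈ ℂ pairwise distinct and b_1,…,b_r ∈ ℤ. Let P ∈ Q_m(f) be any element with P(x,x) = ∏_{i=1}^r (x − a_i)^{d_m(b_i)}. Then every F ∈ Q_m(f) can be written as F = r·P + (x − y)^2·G, where r ∈ ℂ[x,y] is a symmetric polynomial and G ∈ Q_{m−1}(f). -/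
section TermCount
open Polynomial

lemma termcount : ∀ (n : ℕ) (q : Polynomial ℂ), q ≠ 0 → (X - 1) ^ n ∣ q → n < q.support.card := by
  intro n
  induction n with
  | zero => intro q hq _; exact Finset.card_pos.2 (Polynomial.support_nonempty.2 hq)
  | succ n ih =>
    intro q hq hdvd
    set l := q.natTrailingDegree with hl
    have hXl : (X : Polynomial ℂ) ^ l ∣ q := by
      rw [Polynomial.X_pow_dvd_iff]
      exact fun d hd => coeff_eq_zero_of_lt_natTrailingDegree hd
    obtain ⟨q₁, hq₁⟩ := hXl
    have hq₁0 : q₁ ≠ 0 := by rintro rfl; simp at hq₁; exact hq hq₁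
    have h2 : q.coeff l ≠ 0 := mem_support_iff.1 (natTrailingDegree_mem_support_of_nonzero hq)
    have hc0 : q₁.coeff 0 ≠ 0 := by
      have h1 : q.coeff (0 + l) = q₁.coeff 0 := by rw [hq₁]; exact coeff_X_pow_mul q₁ l 0
      rw [zero_add] at h1
      rw [← h1]; exact h2
    have hcop : IsCoprime ((X - 1 : Polynomial ℂ) ^ (n + 1)) ((X : Polynomial ℂ) ^ l) :=
      (IsCoprime.symm ⟨1, -1, by ring⟩ : IsCoprime (X - 1 : Polynomial ℂ) X).pow
    have hdvd1 : (X - 1 : Polynomial ℂ) ^ (n + 1) ∣ q₁ :=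
      hcop.dvd_of_dvd_mul_left (hq₁ ▸ hdvd)
    have hdeg : 1 ≤ q₁.natDegree := by
      have hle := Polynomial.natDegree_le_of_dvd hdvd1 hq₁0
      have h3 : ((X - 1 : Polynomial ℂ) ^ (n + 1)).natDegree = n + 1 := by
        have hx1 : (X - 1 : Polynomial ℂ) = X - C 1 := by rw [map_one]
        rw [Polynomial.natDegree_pow, hx1, Polynomial.natDegree_X_sub_C]
        ring
      omega
    have hder0 : derivative q₁ ≠ 0 := by
      intro h
      have := Polynomial.natDegree_eq_zero_of_derivative_eq_zero h
      omega
    have hderdvd : (X - 1 : Polynomial ℂ) ^ n ∣ derivative q₁ := by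
      obtain ⟨w, hw⟩ := hdvd1
      rw [hw, derivative_mul, derivative_pow]
      refine dvd_add ?_ ?_
      · refine ⟨C ((n:ℂ)+1) * derivative (X - 1) * w, ?_⟩
        rw [Nat.add_sub_cancel]
        push_cast
        ring
      · exact ⟨(X - 1) * derivative w, by ring⟩
    have hcard1 : n < (derivative q₁).support.card := ih _ hder0 hderdvd
    have hsubset : (derivative q₁).support.image (· + 1) ⊆ q₁.support.erase 0 := by
      intro j hj
      simp only [Finset.mem_image] at hj
      obtain ⟨i, hi, rfl⟩ := hj
      rw [mem_support_iff, coeff_derivative] at hi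
      rw [Finset.mem_erase, mem_support_iff]
      constructor
      · omega
      · intro h; rw [h] at hi; simp at hi
    have hcard2 : (derivative q₁).support.card ≤ q₁.support.card - 1 := by
      have h0 : (0 : ℕ) ∈ q₁.support := mem_support_iff.2 hc0
      have hc := Finset.card_le_card hsubset
      rw [Finset.card_image_of_injective _ (add_left_injective 1)] at hc
      rw [Finset.card_erase_of_mem h0] at hc
      exact hc
    have hcard3 : q₁.support.card ≤ q.support.card := by
      have hsub : q₁.support.image (· + l) ⊆ q.support := by
        intro j hj
        simp only [Finset.mem_image] at hj
        obtain ⟨i, hi, rfl⟩ := hj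
        rw [mem_support_iff] at hi ⊢
        rw [hq₁, coeff_X_pow_mul]
        exact hi
      have hc := Finset.card_le_card hsub
      rwa [Finset.card_image_of_injective _ (add_left_injective l)] at hc
    have h0 : (0 : ℕ) ∈ q₁.support := mem_support_iff.2 hc0
    have : 1 ≤ q₁.support.card := Finset.card_pos.2 ⟨0, h0⟩
    omega

end TermCount



open MvPolynomial

noncomputable def beta : MvPolynomial (Fin 2) ℂ →ₐ[ℂ] Polynomial (Polynomial ℂ) :=
  MvPolynomial.aeval (fun v : Fin 2 =>
    if v = 0 then Polynomial.C Polynomial.X * Polynomial.X else Polynomial.X)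

lemma beta_X0 : beta (X 0) = Polynomial.C Polynomial.X * Polynomial.X := by
  simp [beta]

lemma beta_X1 : beta (X 1) = Polynomial.X := by
  simp [beta]

lemma beta_coeff_natDegree (Φ : MvPolynomial (Fin 2) ℂ) (d : ℕ) :
    ((beta Φ).coeff d).natDegree ≤ d := by
  induction Φ using MvPolynomial.induction_on generalizing d with
  | C a =>
    have : beta (C a) = Polynomial.C (Polynomial.C a) := by
      simp [beta, MvPolynomial.algebraMap_eq]
    rw [this, Polynomial.coeff_C]
    split <;> simp
  | add p q hp hq =>
    rw [map_add, Polynomial.coeff_add]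
    exact le_trans (Polynomial.natDegree_add_le _ _) (max_le (hp d) (hq d))
  | mul_X p i hp =>
    rw [map_mul]
    fin_cases i
    · show ((beta p * beta (X 0)).coeff d).natDegree ≤ d
      rw [beta_X0]
      have hrw : beta p * (Polynomial.C Polynomial.X * Polynomial.X)
          = (Polynomial.C Polynomial.X * beta p) * Polynomial.X := by ring
      rw [hrw]
      cases d with
      | zero => simp
      | succ d =>
        rw [Polynomial.coeff_mul_X, Polynomial.coeff_C_mul]
        refine le_trans (Polynomial.natDegree_mul_le) ?_
        have := hp d
        simp only [Polynomial.natDegree_X]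
        omega
    · show ((beta p * beta (X 1)).coeff d).natDegree ≤ d
      rw [beta_X1]
      cases d with
      | zero => simp
      | succ d =>
        rw [Polynomial.coeff_mul_X]
        exact le_trans (hp d) (by omega)

lemma core (m bb : ℕ) (Φ : MvPolynomial (Fin 2) ℂ)
    (h : (X 0 - X 1) ^ (2 * m + 1) ∣
      X 0 ^ bb * Φ - X 1 ^ bb * rename (Equiv.swap (0 : Fin 2) 1) Φ) :
    Polynomial.X ^ (min m bb) ∣ diag Φ := by
  set A := beta Φ with hA
  set B := beta (rename (Equiv.swap (0 : Fin 2) 1) Φ) with hB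
  set p : Polynomial ℂ := (Polynomial.X - 1) ^ (2 * m + 1) with hp
  -- transport the divisibility through beta
  have h2 : Polynomial.C p * (Polynomial.X ^ (2 * m + 1) : Polynomial (Polynomial ℂ)) ∣
      Polynomial.X ^ bb * (Polynomial.C (Polynomial.X ^ bb) * A - B) := by
    have h1 := map_dvd beta h
    rw [map_sub, map_mul, map_mul, map_pow, map_pow, map_pow, map_sub, beta_X0, beta_X1] at h1
    have e1 : (Polynomial.C Polynomial.X * Polynomial.X - Polynomial.X : Polynomial (Polynomial ℂ))
        = Polynomial.C (Polynomial.X - 1) * Polynomial.X := by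
      rw [map_sub, map_one]; ring
    rw [e1] at h1
    have e2 : (Polynomial.C (Polynomial.X - 1) * Polynomial.X) ^ (2*m+1)
        = Polynomial.C p * Polynomial.X ^ (2*m+1) := by
      rw [mul_pow, ← map_pow, hp]
    have e3 : (Polynomial.C Polynomial.X * Polynomial.X) ^ bb * A - Polynomial.X ^ bb * B
        = Polynomial.X ^ bb * (Polynomial.C (Polynomial.X ^ bb) * A - B) := by
      rw [mul_pow, ← map_pow]; ring
    rw [e2, e3] at h1
    exact h1
  obtain ⟨Z, hZ⟩ := h2
  -- key: each low coefficient of A vanishes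
  have key : ∀ d, d < min m bb → A.coeff d = 0 := by
    intro d hd
    have hWc : Polynomial.X ^ bb * A.coeff d - B.coeff d
        = p * ((Polynomial.X ^ (2*m+1) * Z).coeff (d + bb)) := by
      have := congrArg (fun q => Polynomial.coeff q (d + bb)) hZ
      simp only [mul_assoc, Polynomial.coeff_X_pow_mul, Polynomial.coeff_C_mul] at this
      rw [Polynomial.coeff_sub, Polynomial.coeff_C_mul] at this
      exact this
    set q : Polynomial ℂ := Polynomial.X ^ bb * A.coeff d - B.coeff d with hq
    have hpq : p ∣ q := ⟨_, hWc⟩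
    have hq0 : q = 0 := by
      by_contra hq0
      have hcard := termcount (2*m+1) q hq0 hpq
      -- bound the support card of q
      have cardbound : ∀ φ : Polynomial ℂ, φ.natDegree ≤ d →
          (Polynomial.X ^ bb * φ).support.card ≤ d + 1 := by
        intro φ hφ
        have hsub : (Polynomial.X ^ bb * φ).support ⊆ φ.support.image (· + bb) := by
          intro j hj
          rw [Polynomial.mem_support_iff] at hj
          rcases lt_or_ge j bb with hj2 | hj2
          · exfalso
            apply hj
            have : (Polynomial.X : Polynomial ℂ) ^ bb ∣ Polynomial.X ^ bb * φ := ⟨φ, rfl⟩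
            exact (Polynomial.X_pow_dvd_iff.1 this) j hj2
          · rw [Finset.mem_image]
            refine ⟨j - bb, ?_, by omega⟩
            rw [Polynomial.mem_support_iff]
            intro hc
            apply hj
            have e : j - bb + bb = j := by omega
            rw [← e, Polynomial.coeff_X_pow_mul, hc]
        calc (Polynomial.X ^ bb * φ).support.card
            ≤ (φ.support.image (· + bb)).card := Finset.card_le_card hsub
          _ ≤ φ.support.card := Finset.card_image_le
          _ ≤ φ.natDegree + 1 := by
              have := Finset.card_le_card (Polynomial.supp_subset_range_natDegree_succ (p := φ))
              simpa using this
          _ ≤ d + 1 := by omega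
      have cA := cardbound (A.coeff d) (beta_coeff_natDegree Φ d)
      have cB : (B.coeff d).support.card ≤ d + 1 := by
        have := Finset.card_le_card
          (Polynomial.supp_subset_range_natDegree_succ (p := B.coeff d))
        have h2 := beta_coeff_natDegree (rename (Equiv.swap (0 : Fin 2) 1) Φ) d
        rw [← hB] at h2
        simp only [Finset.card_range] at this
        omega
      have hsupp : q.support ⊆ (Polynomial.X ^ bb * A.coeff d).support ∪ (B.coeff d).support := by
        intro j hj
        rw [Polynomial.mem_support_iff] at hj
        rw [Finset.mem_union, Polynomial.mem_support_iff, Polynomial.mem_support_iff]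
        by_contra hc
        push_neg at hc
        apply hj
        rw [hq, Polynomial.coeff_sub, hc.1, hc.2, sub_zero]
      have := Finset.card_le_card hsupp
      have hcu := Finset.card_union_le (Polynomial.X ^ bb * A.coeff d).support (B.coeff d).support
      omega
    -- from q = 0 conclude A.coeff d = 0
    by_contra hA0
    have hne : (Polynomial.X ^ bb * A.coeff d) = B.coeff d := by
      have := sub_eq_zero.1 hq0
      exact this
    have hBne : B.coeff d ≠ 0 := by
      rw [← hne]
      exact mul_ne_zero (pow_ne_zero _ Polynomial.X_ne_zero) hA0
    have hdegL : (Polynomial.X ^ bb * A.coeff d).natDegree = bb + (A.coeff d).natDegree := by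
      rw [Polynomial.natDegree_mul (pow_ne_zero _ Polynomial.X_ne_zero) hA0,
        Polynomial.natDegree_X_pow]
    have hdegB := beta_coeff_natDegree (rename (Equiv.swap (0 : Fin 2) 1) Φ) d
    rw [← hB] at hdegB
    rw [hne] at hdegL
    omega
  -- identify diag with eval at 1 of beta
  have hdiag : diag Φ = Polynomial.map (Polynomial.evalRingHom (1:ℂ)) A := by
    have : (Polynomial.mapAlgHom (Polynomial.aeval (1:ℂ))).comp beta
        = (MvPolynomial.aeval (fun _ : Fin 2 => (Polynomial.X : Polynomial ℂ)) :
            MvPolynomial (Fin 2) ℂ →ₐ[ℂ] Polynomial ℂ) := by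
      apply MvPolynomial.algHom_ext
      intro i
      fin_cases i
      · simp [beta_X0, Polynomial.mapAlgHom]
      · simp [beta_X1, Polynomial.mapAlgHom]
    have h3 := DFunLike.congr_fun this Φ
    simp only [AlgHom.comp_apply] at h3
    show (MvPolynomial.aeval (fun _ : Fin 2 => (Polynomial.X : Polynomial ℂ))) Φ = _
    rw [← h3]
    simp [Polynomial.mapAlgHom]
    rfl
  rw [Polynomial.X_pow_dvd_iff]
  intro d hd
  rw [hdiag, Polynomial.coeff_map, key d hd]
  simp

noncomputable def shiftMv (c : ℂ) : MvPolynomial (Fin 2) ℂ →ₐ[ℂ] MvPolynomial (Fin 2) ℂ :=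
  aeval (fun v => X v + C c)

lemma shiftMv_X (c : ℂ) (v : Fin 2) : shiftMv c (X v) = X v + C c := by simp [shiftMv]

lemma shift_swap (c : ℂ) (F : MvPolynomial (Fin 2) ℂ) :
    rename (Equiv.swap (0 : Fin 2) 1) (shiftMv c F)
      = shiftMv c (rename (Equiv.swap (0 : Fin 2) 1) F) := by
  have : (rename (Equiv.swap (0 : Fin 2) 1) : MvPolynomial (Fin 2) ℂ →ₐ[ℂ] _).comp (shiftMv c)
      = (shiftMv c).comp (rename (Equiv.swap (0 : Fin 2) 1)) := by
    apply MvPolynomial.algHom_ext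
    intro v
    simp [shiftMv]
  exact DFunLike.congr_fun this F

lemma diag_rename (F : MvPolynomial (Fin 2) ℂ) :
    diag (rename (Equiv.swap (0 : Fin 2) 1) F) = diag F := by
  rw [diag, diag, aeval_rename]
  rfl

lemma diag_shift (c : ℂ) (F : MvPolynomial (Fin 2) ℂ) :
    diag (shiftMv c F)
      = Polynomial.aeval (Polynomial.X + Polynomial.C c) (diag F) := by
  have : (MvPolynomial.aeval (fun _ : Fin 2 => (Polynomial.X : Polynomial ℂ))).comp (shiftMv c)
      = (Polynomial.aeval (Polynomial.X + Polynomial.C c)).comp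
        (MvPolynomial.aeval (fun _ : Fin 2 => (Polynomial.X : Polynomial ℂ))) := by
    apply MvPolynomial.algHom_ext
    intro v
    simp [shiftMv]
  exact DFunLike.congr_fun this F

lemma shift_unshift (c : ℂ) (p : Polynomial ℂ) :
    Polynomial.aeval (Polynomial.X - Polynomial.C c)
      (Polynomial.aeval (Polynomial.X + Polynomial.C c) p) = p := by
  have : (Polynomial.aeval (Polynomial.X - Polynomial.C c) :
        Polynomial ℂ →ₐ[ℂ] Polynomial ℂ).comp
      (Polynomial.aeval (Polynomial.X + Polynomial.C c)) = AlgHom.id ℂ _ := by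
    apply Polynomial.algHom_ext
    simp
  exact DFunLike.congr_fun this p

lemma eval_diag_shift (c : ℂ) (F : MvPolynomial (Fin 2) ℂ) :
    Polynomial.aeval (0 : ℂ) (diag (shiftMv c F))
      = MvPolynomial.aeval (fun _ : Fin 2 => c) F := by
  have : ((Polynomial.aeval (0:ℂ)).comp
        ((MvPolynomial.aeval (fun _ : Fin 2 => (Polynomial.X : Polynomial ℂ))).comp (shiftMv c)))
      = MvPolynomial.aeval (fun _ : Fin 2 => c) := by
    apply MvPolynomial.algHom_ext
    intro v
    simp [shiftMv]
  exact DFunLike.congr_fun this F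

lemma X_not_dvd_diag_shift (c : ℂ) (F : MvPolynomial (Fin 2) ℂ)
    (h : MvPolynomial.aeval (fun _ : Fin 2 => c) F ≠ 0) :
    ¬ (Polynomial.X ∣ diag (shiftMv c F)) := by
  rw [Polynomial.X_dvd_iff]
  intro hc
  apply h
  rw [← eval_diag_shift c F]
  have : Polynomial.aeval (0:ℂ) (diag (shiftMv c F))
      = Polynomial.eval 0 (diag (shiftMv c F)) := by
    rw [← Polynomial.coe_aeval_eq_eval]
  rw [this, ← Polynomial.coeff_zero_eq_eval_zero, hc]

lemma diag_rename' (F : MvPolynomial (Fin 2) ℂ) :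
    diag (rename (Equiv.swap (0 : Fin 2) 1) F) = diag F := by
  rw [diag, diag, aeval_rename]; rfl

/-- If the diagonal of `D` vanishes then `X 0 - X 1` divides `D`. -/
lemma X_sub_X_dvd (D : MvPolynomial (Fin 2) ℂ) (h : diag D = 0) : (X 0 - X 1) ∣ D := by
  set φ : MvPolynomial (Fin 2) ℂ →ₐ[ℂ] MvPolynomial (Fin 2) ℂ :=
    MvPolynomial.aeval (fun _ : Fin 2 => (X 1 : MvPolynomial (Fin 2) ℂ)) with hφ
  have aux : ∀ p : MvPolynomial (Fin 2) ℂ, (X 0 - X 1) ∣ p - φ p := by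
    intro p
    induction p using MvPolynomial.induction_on with
    | C a => simp [hφ]
    | add p q hp hq =>
      rw [map_add]
      have e : p + q - (φ p + φ q) = (p - φ p) + (q - φ q) := by ring
      rw [e]; exact dvd_add hp hq
    | mul_X p i hp =>
      rw [map_mul]
      have hXi : φ (X i) = X 1 := by simp [hφ]
      rw [hXi]
      have e : p * X i - φ p * X 1 = (p - φ p) * X i + φ p * (X i - X 1) := by ring
      rw [e]
      refine dvd_add (hp.mul_right _) (Dvd.dvd.mul_left ?_ _)
      fin_cases i
      · rfl
      · simp
  have hφD : φ D = 0 := by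
    have hcomp : (Polynomial.aeval (X 1 : MvPolynomial (Fin 2) ℂ)).comp
        (MvPolynomial.aeval (fun _ : Fin 2 => (Polynomial.X : Polynomial ℂ))) = φ := by
      apply MvPolynomial.algHom_ext
      intro v
      simp [hφ]
    have := DFunLike.congr_fun hcomp D
    simp only [AlgHom.comp_apply] at this
    rw [hφ, ← this]
    show Polynomial.aeval _ (diag D) = 0
    rw [h, map_zero]
  have := aux D
  rwa [hφD, sub_zero] at this

lemma diag_mul (F G : MvPolynomial (Fin 2) ℂ) : diag (F * G) = diag F * diag G :=
  map_mul _ _ _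

lemma rename_swap_prod {r : ℕ} (s : Finset (Fin r)) (α : Fin r → ℂ) (e : Fin r → ℕ) (v : Fin 2) :
    rename (Equiv.swap (0 : Fin 2) 1) (∏ j ∈ s, (X v - C (α j)) ^ (e j))
      = ∏ j ∈ s, (X (Equiv.swap (0 : Fin 2) 1 v) - C (α j)) ^ (e j) := by
  rw [map_prod]
  refine Finset.prod_congr rfl fun j _ => ?_
  simp

lemma aeval_const_prod_ne_zero {r : ℕ} (s : Finset (Fin r)) (α : Fin r → ℂ) (e : Fin r → ℕ)
    (v : Fin 2) (c : ℂ) (h : ∀ j ∈ s, α j ≠ c) :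
    MvPolynomial.aeval (fun _ : Fin 2 => c) (∏ j ∈ s, (X v - C (α j)) ^ (e j)) ≠ 0 := by
  rw [map_prod]
  rw [Finset.prod_ne_zero_iff]
  intro j hj
  rw [map_pow]
  apply pow_ne_zero
  have : (MvPolynomial.aeval (fun _ : Fin 2 => c)) (X v - C (α j)) = c - α j := by simp
  rw [this, sub_ne_zero]
  exact fun hc => h j hj hc.symm

lemma dvd_diag_aux (m bb : ℕ) (U F' : MvPolynomial (Fin 2) ℂ)
    (h : (X 0 - X 1) ^ (2 * m + 1) ∣
      X 0 ^ bb * (U * F') - X 1 ^ bb * rename (Equiv.swap (0 : Fin 2) 1) (U * F'))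
    (hU : ¬ ((Polynomial.X : Polynomial ℂ) ∣ diag U)) :
    (Polynomial.X : Polynomial ℂ) ^ (min m bb) ∣ diag F' := by
  have hc := core m bb (U * F') h
  rw [diag_mul] at hc
  exact Prime.pow_dvd_of_dvd_mul_left Polynomial.prime_X _ hU hc


lemma swap_swap (F : MvPolynomial (Fin 2) ℂ) :
    rename (Equiv.swap (0 : Fin 2) 1) (rename (Equiv.swap (0 : Fin 2) 1) F) = F := by
  rw [rename_rename]
  have : (⇑(Equiv.swap (0 : Fin 2) 1) ∘ ⇑(Equiv.swap (0 : Fin 2) 1)) = id := by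
    funext x; simp
  rw [this, rename_id, AlgHom.id_apply]

lemma dvd_diag (m : ℕ) {r : ℕ} (a : Fin r → ℂ) (b : Fin r → ℤ) (ha : Function.Injective a)
    (F : MvPolynomial (Fin 2) ℂ) (hF : MemQalg a b m F) (i : Fin r) :
    (Polynomial.X - Polynomial.C (a i)) ^ (min m (b i).natAbs) ∣ diag F := by
  have hdvd0 : (X 0 - X 1) ^ (2 * m + 1) ∣
      numerAt a b 0 * denomAt a b 1 * F
        - numerAt a b 1 * denomAt a b 0 * rename (Equiv.swap (0 : Fin 2) 1) F := hF
  set c := a i with hc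
  have hshiftd : ∀ v : Fin 2, shiftMv c (X v - C c) = X v := by
    intro v; simp [shiftMv]
  have hswapsig : ∀ G, rename (Equiv.swap (0 : Fin 2) 1) (shiftMv c G)
      = shiftMv c (rename (Equiv.swap (0 : Fin 2) 1) G) := shift_swap c
  have hXX : shiftMv c ((X 0 - X 1) ^ (2 * m + 1)) = (X 0 - X 1) ^ (2 * m + 1) := by
    rw [map_pow, map_sub, shiftMv_X, shiftMv_X]; ring_nf
  rcases lt_trichotomy (b i) 0 with hbi | hbi | hbi
  · -- b i < 0 : factor sits in the denominator
    set bb := (-(b i)).toNat with hbb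
    have hnatabs : (b i).natAbs = bb := by omega
    have hmem : i ∈ Finset.univ.filter (fun j => b j < 0) := by simp [hbi]
    set hs := (Finset.univ.filter (fun j : Fin r => b j < 0)).erase i with hhs
    have hfact : ∀ v, denomAt a b v
        = (X v - C c) ^ bb * ∏ j ∈ hs, (X v - C (a j)) ^ (-(b j)).toNat := by
      intro v
      rw [denomAt, ← Finset.mul_prod_erase _ _ hmem]
    set h0 := ∏ j ∈ hs, (X (0:Fin 2) - C (a j)) ^ (-(b j)).toNat with hh0
    set h1 := ∏ j ∈ hs, (X (1:Fin 2) - C (a j)) ^ (-(b j)).toNat with hh1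
    have hsh0 : rename (Equiv.swap (0 : Fin 2) 1) h0 = h1 := by
      rw [hh0, hh1, rename_swap_prod]; simp
    have hsn1 : rename (Equiv.swap (0 : Fin 2) 1) (numerAt a b 1) = numerAt a b 0 := by
      rw [numerAt, numerAt, rename_swap_prod]; simp
    have key : (X 0 - X 1) ^ (2 * m + 1) ∣
        X 0 ^ bb * (shiftMv c (numerAt a b 1 * h0)
            * shiftMv c (rename (Equiv.swap (0 : Fin 2) 1) F))
          - X 1 ^ bb * rename (Equiv.swap (0 : Fin 2) 1)
              (shiftMv c (numerAt a b 1 * h0)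
                * shiftMv c (rename (Equiv.swap (0 : Fin 2) 1) F)) := by
      rw [← dvd_neg] at hdvd0
      have h2 := map_dvd (shiftMv c) hdvd0
      rw [hXX] at h2
      convert h2 using 1
      rw [map_neg, map_sub]
      rw [neg_sub]
      congr 1
      · simp only [map_mul, hfact 0, map_pow, hshiftd 0]
        ring
      · simp only [map_mul, hswapsig, hsn1, hsh0, swap_swap, hfact 1, map_pow, hshiftd 1]
        ring
    have hUnd : ¬ ((Polynomial.X : Polynomial ℂ) ∣ diag (shiftMv c (numerAt a b 1 * h0))) := by
      apply X_not_dvd_diag_shift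
      rw [map_mul]
      apply mul_ne_zero
      · rw [numerAt]
        apply aeval_const_prod_ne_zero
        intro j hj hcc
        simp only [Finset.mem_filter] at hj
        have hji : j = i := ha (hcc.trans hc)
        rw [hji] at hj
        omega
      · rw [hh0]
        apply aeval_const_prod_ne_zero
        intro j hj hcc
        rw [hhs, Finset.mem_erase] at hj
        exact hj.1 (ha (hcc.trans hc))
    have hXk := dvd_diag_aux m bb _ _ key hUnd
    have hdF' : diag (shiftMv c (rename (Equiv.swap (0 : Fin 2) 1) F))
        = Polynomial.aeval (Polynomial.X + Polynomial.C c) (diag F) := by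
      rw [diag_shift, diag_rename]
    rw [hdF'] at hXk
    have h3 := map_dvd (Polynomial.aeval (Polynomial.X - Polynomial.C c)) hXk
    rw [shift_unshift, map_pow, Polynomial.aeval_X] at h3
    rw [hnatabs]
    exact h3
  · simp [hbi]
  · -- 0 < b i : factor sits in the numerator
    set bb := (b i).toNat with hbb
    have hnatabs : (b i).natAbs = bb := by omega
    have hmem : i ∈ Finset.univ.filter (fun j => 0 < b j) := by simp [hbi]
    set gs := (Finset.univ.filter (fun j : Fin r => 0 < b j)).erase i with hgs
    have hfact : ∀ v, numerAt a b v
        = (X v - C c) ^ bb * ∏ j ∈ gs, (X v - C (a j)) ^ (b j).toNat := by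
      intro v
      rw [numerAt, ← Finset.mul_prod_erase _ _ hmem]
    set g0 := ∏ j ∈ gs, (X (0:Fin 2) - C (a j)) ^ (b j).toNat with hg0
    set g1 := ∏ j ∈ gs, (X (1:Fin 2) - C (a j)) ^ (b j).toNat with hg1
    have hsg0 : rename (Equiv.swap (0 : Fin 2) 1) g0 = g1 := by
      rw [hg0, hg1, rename_swap_prod]; simp
    have hsd1 : rename (Equiv.swap (0 : Fin 2) 1) (denomAt a b 1) = denomAt a b 0 := by
      rw [denomAt, denomAt, rename_swap_prod]; simp
    have key : (X 0 - X 1) ^ (2 * m + 1) ∣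
        X 0 ^ bb * (shiftMv c (g0 * denomAt a b 1) * shiftMv c F)
          - X 1 ^ bb * rename (Equiv.swap (0 : Fin 2) 1)
              (shiftMv c (g0 * denomAt a b 1) * shiftMv c F) := by
      have h2 := map_dvd (shiftMv c) hdvd0
      rw [hXX] at h2
      convert h2 using 1
      rw [map_sub]
      congr 1
      · simp only [map_mul, hfact 0, map_pow, hshiftd 0]
        ring
      · simp only [map_mul, hswapsig, hsg0, hsd1, hfact 1, map_pow, hshiftd 1]
        ring
    have hUnd : ¬ ((Polynomial.X : Polynomial ℂ) ∣ diag (shiftMv c (g0 * denomAt a b 1))) := by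
      apply X_not_dvd_diag_shift
      rw [map_mul]
      apply mul_ne_zero
      · rw [hg0]
        apply aeval_const_prod_ne_zero
        intro j hj hcc
        rw [hgs, Finset.mem_erase] at hj
        exact hj.1 (ha (hcc.trans hc))
      · rw [denomAt]
        apply aeval_const_prod_ne_zero
        intro j hj hcc
        simp only [Finset.mem_filter] at hj
        have hji : j = i := ha (hcc.trans hc)
        rw [hji] at hj
        omega
    have hXk := dvd_diag_aux m bb _ _ key hUnd
    have hdF' : diag (shiftMv c F)
        = Polynomial.aeval (Polynomial.X + Polynomial.C c) (diag F) := diag_shift c F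
    rw [hdF'] at hXk
    have h3 := map_dvd (Polynomial.aeval (Polynomial.X - Polynomial.C c)) hXk
    rw [shift_unshift, map_pow, Polynomial.aeval_X] at h3
    rw [hnatabs]
    exact h3

lemma diag_add (F G : MvPolynomial (Fin 2) ℂ) : diag (F + G) = diag F + diag G :=
  map_add (MvPolynomial.aeval (fun _ : Fin 2 => (Polynomial.X : Polynomial ℂ))) _ _

lemma diag_numer {r : ℕ} (a : Fin r → ℂ) (b : Fin r → ℤ) (v : Fin 2) :
    diag (numerAt a b v)
      = ∏ j ∈ Finset.univ.filter (fun j => 0 < b j),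
          (Polynomial.X - Polynomial.C (a j)) ^ (b j).toNat := by
  rw [numerAt, diag, map_prod]
  refine Finset.prod_congr rfl fun j _ => ?_
  simp

lemma diag_denom {r : ℕ} (a : Fin r → ℂ) (b : Fin r → ℤ) (v : Fin 2) :
    diag (denomAt a b v)
      = ∏ j ∈ Finset.univ.filter (fun j => b j < 0),
          (Polynomial.X - Polynomial.C (a j)) ^ (-(b j)).toNat := by
  rw [denomAt, diag, map_prod]
  refine Finset.prod_congr rfl fun j _ => ?_
  simp

lemma prod_XC_ne_zero {r : ℕ} (a : Fin r → ℂ) (s : Finset (Fin r)) (e : Fin r → ℕ) :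
    (∏ j ∈ s, (Polynomial.X - Polynomial.C (a j)) ^ (e j)) ≠ 0 := by
  rw [Finset.prod_ne_zero_iff]
  intro j _
  exact pow_ne_zero _ (Polynomial.X_sub_C_ne_zero (a j))


/-- let `m ≥ 1`, `f = ∏ i (x − a_i)^{b_i}` with the `a_i` pairwise distinct,
and let `P ∈ Q_m(f)` be any element with `P(x,x) = ∏ i (x − a_i)^{d_m(b_i)}`. Then every
`F ∈ Q_m(f)` can be written as `F = s·P + (x − y)²·G` with `s` a symmetric polynomial and
`G ∈ Q_{m−1}(f)`. -/
theorem stmt16 (m : ℕ) (hm : 1 ≤ m) (r : ℕ) (a : Fin r → ℂ) (b : Fin r → ℤ)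
    (ha : Function.Injective a)
    (P : MvPolynomial (Fin 2) ℂ) (hP : MemQalg a b m P)
    (hPdiag : diag P = ∏ i : Fin r, (Polynomial.X - Polynomial.C (a i)) ^ (min m (b i).natAbs))
    (F : MvPolynomial (Fin 2) ℂ) (hF : MemQalg a b m F) :
    ∃ (s G : MvPolynomial (Fin 2) ℂ),
      rename (Equiv.swap (0 : Fin 2) 1) s = s ∧
      MemQalg a b (m - 1) G ∧
      F = s * P + (X 0 - X 1) ^ 2 * G := by
  have hXX0 : (X 0 - X 1 : MvPolynomial (Fin 2) ℂ) ≠ 0 := by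
    rw [sub_ne_zero]
    exact fun hc => absurd (MvPolynomial.X_injective hc) (by decide)
  -- Step 1: diag P divides diag F
  have hdvdP : diag P ∣ diag F := by
    rw [hPdiag]
    apply Finset.prod_dvd_of_coprime
    · intro i _ j _ hij
      exact ((Polynomial.pairwise_coprime_X_sub_C ha hij).pow :)
    · intro i _
      exact dvd_diag m a b ha F hF i
  obtain ⟨q, hq⟩ := hdvdP
  -- Step 2: the symmetric multiplier s
  set z : MvPolynomial (Fin 2) ℂ := C (2⁻¹ : ℂ) * (X 0 + X 1) with hz
  set s : MvPolynomial (Fin 2) ℂ := Polynomial.aeval z q with hs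
  have hsymm : rename (Equiv.swap (0 : Fin 2) 1) s = s := by
    rw [hs, ← Polynomial.aeval_algHom_apply]
    congr 1
    rw [hz]
    rw [map_mul, map_add, rename_C, rename_X, rename_X]
    simp [Equiv.swap_apply_left, Equiv.swap_apply_right, add_comm]
  have hdiags : diag s = q := by
    have h1 : diag s = Polynomial.aeval (diag z) q :=
      (Polynomial.aeval_algHom_apply
        (MvPolynomial.aeval (fun _ : Fin 2 => (Polynomial.X : Polynomial ℂ))) z q).symm
    have h2 : diag z = Polynomial.X := by
      rw [hz, diag]
      simp only [map_mul, map_add, MvPolynomial.aeval_C, MvPolynomial.aeval_X,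
        Polynomial.algebraMap_eq]
      have h2X : (Polynomial.X + Polynomial.X : Polynomial ℂ)
          = Polynomial.C 2 * Polynomial.X := by
        rw [show (Polynomial.C (2:ℂ)) = (2 : Polynomial ℂ) from map_ofNat _ 2]
        ring
      rw [h2X, ← mul_assoc, ← Polynomial.C_mul]
      norm_num
    rw [h1, h2]
    exact DFunLike.congr_fun Polynomial.aeval_X_left q
  -- Step 3: D := F - s * P has vanishing diagonal and lies in Q_m
  set D : MvPolynomial (Fin 2) ℂ := F - s * P with hD
  have hWD : (X 0 - X 1) ^ (2 * m + 1) ∣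
      numerAt a b 0 * denomAt a b 1 * D
        - numerAt a b 1 * denomAt a b 0 * rename (Equiv.swap (0 : Fin 2) 1) D := by
    have hFd : (X 0 - X 1) ^ (2 * m + 1) ∣
        numerAt a b 0 * denomAt a b 1 * F
          - numerAt a b 1 * denomAt a b 0 * rename (Equiv.swap (0 : Fin 2) 1) F := hF
    have hPd : (X 0 - X 1) ^ (2 * m + 1) ∣
        numerAt a b 0 * denomAt a b 1 * P
          - numerAt a b 1 * denomAt a b 0 * rename (Equiv.swap (0 : Fin 2) 1) P := hP
    have e : numerAt a b 0 * denomAt a b 1 * D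
        - numerAt a b 1 * denomAt a b 0 * rename (Equiv.swap (0 : Fin 2) 1) D
        = (numerAt a b 0 * denomAt a b 1 * F
            - numerAt a b 1 * denomAt a b 0 * rename (Equiv.swap (0 : Fin 2) 1) F)
          - s * (numerAt a b 0 * denomAt a b 1 * P
            - numerAt a b 1 * denomAt a b 0 * rename (Equiv.swap (0 : Fin 2) 1) P) := by
      rw [hD, map_sub, map_mul, hsymm]
      ring
    rw [e]
    exact dvd_sub hFd (hPd.mul_left s)
  have hdiagD : diag D = 0 := by
    have : diag D = diag F - diag s * diag P := by
      rw [hD]; simp only [diag, map_sub, map_mul]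
    rw [this, hdiags, hq]
    ring
  obtain ⟨H, hH⟩ := X_sub_X_dvd D hdiagD
  -- Step 4: the symmetric combination S
  set S : MvPolynomial (Fin 2) ℂ :=
    numerAt a b 0 * denomAt a b 1 * H
      + numerAt a b 1 * denomAt a b 0 * rename (Equiv.swap (0 : Fin 2) 1) H with hS
  have hswapD : rename (Equiv.swap (0 : Fin 2) 1) D
      = (X 1 - X 0) * rename (Equiv.swap (0 : Fin 2) 1) H := by
    rw [hH, map_mul, map_sub, rename_X, rename_X]
    simp [Equiv.swap_apply_left, Equiv.swap_apply_right]
  have hWDeq : numerAt a b 0 * denomAt a b 1 * D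
      - numerAt a b 1 * denomAt a b 0 * rename (Equiv.swap (0 : Fin 2) 1) D
      = (X 0 - X 1) * S := by
    rw [hS, hswapD, hH]
    ring
  have hSdvd : (X 0 - X 1) ^ (2 * m) ∣ S := by
    have h1 : (X 0 - X 1) * (X 0 - X 1) ^ (2 * m) ∣ (X 0 - X 1) * S := by
      rw [← hWDeq, ← pow_succ']
      exact hWD
    exact (mul_dvd_mul_iff_left hXX0).1 h1
  have hdiagS : diag S = 0 := by
    obtain ⟨T, hT⟩ := dvd_trans (dvd_pow_self (X 0 - X 1 : MvPolynomial (Fin 2) ℂ)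
      (by omega : 2 * m ≠ 0)) hSdvd
    rw [hT]
    simp [diag]
  have hdiagH : diag H = 0 := by
    have e : diag S = 2 * (diag (numerAt a b 0) * diag (denomAt a b 0) * diag H) := by
      rw [hS, diag_add, diag_mul, diag_mul, diag_mul, diag_mul, diag_rename']
      rw [diag_numer, diag_numer, diag_denom, diag_denom]
      ring
    rw [hdiagS] at e
    have hnz : (2 : Polynomial ℂ) * (diag (numerAt a b 0) * diag (denomAt a b 0)) ≠ 0 := by
      apply mul_ne_zero (by norm_num)
      apply mul_ne_zero
      · rw [diag_numer]; exact prod_XC_ne_zero a _ _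
      · rw [diag_denom]; exact prod_XC_ne_zero a _ _
    have e2 : (2 * (diag (numerAt a b 0) * diag (denomAt a b 0))) * diag H = 0 := by
      linear_combination -e
    rcases mul_eq_zero.1 e2 with h | h
    · exact absurd h hnz
    · exact h
  obtain ⟨G, hG⟩ := X_sub_X_dvd H hdiagH
  -- Step 5: G is in Q_{m-1}
  refine ⟨s, G, hsymm, ?_, ?_⟩
  · show (X 0 - X 1) ^ (2 * (m - 1) + 1) ∣ _
    have hDG : D = (X 0 - X 1) ^ 2 * G := by
      rw [hH, hG]; ring
    have hswapG : rename (Equiv.swap (0 : Fin 2) 1) D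
        = (X 0 - X 1) ^ 2 * rename (Equiv.swap (0 : Fin 2) 1) G := by
      rw [hDG, map_mul, map_pow, map_sub, rename_X, rename_X]
      simp only [Equiv.swap_apply_left, Equiv.swap_apply_right]
      ring_nf
    have hWG : numerAt a b 0 * denomAt a b 1 * D
        - numerAt a b 1 * denomAt a b 0 * rename (Equiv.swap (0 : Fin 2) 1) D
        = (X 0 - X 1) ^ 2 * (numerAt a b 0 * denomAt a b 1 * G
            - numerAt a b 1 * denomAt a b 0 * rename (Equiv.swap (0 : Fin 2) 1) G) := by
      rw [hswapG, hDG]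
      ring
    have hpow : (2 * m + 1) = 2 + (2 * (m - 1) + 1) := by omega
    have h1 : (X 0 - X 1) ^ 2 * (X 0 - X 1) ^ (2 * (m - 1) + 1) ∣
        (X 0 - X 1) ^ 2 * (numerAt a b 0 * denomAt a b 1 * G
          - numerAt a b 1 * denomAt a b 0 * rename (Equiv.swap (0 : Fin 2) 1) G) := by
      rw [← pow_add, ← hpow, ← hWG]
      exact hWD
    exact (mul_dvd_mul_iff_left (pow_ne_zero 2 hXX0)).1 h1
  · have hDG : D = (X 0 - X 1) ^ 2 * G := by rw [hH, hG]; ring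
    have : F - s * P = (X 0 - X 1) ^ 2 * G := by rw [← hD, hDG]
    linear_combination this
end

section
/- Let m ≥ 0, let z ∈ ℂ be a non-integer, let U = ℂ ∖ ℝ_{≤0} be the slit plane, and let f(x) = exp(z·Log x) be the principal branch of x^z, which is holomorphic and nowhere vanishing on U. Then the polynomial P(x,y) = Σ_{i=0}^m C(m−z, i)·C(m+z, m−i)·x^i·y^{m−i} belongs to Q_m(f) with respect to U; that is, there exists a function h holomorphic on U × U such that f(x)P(x,y) − f(y)P(y,x) = (x − y)^{2m+1}·h(x,y) for all x, y ∈ U. Moreover P(x,x) = C(2m,m)·x^m. -/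
open MvPolynomial

/-- `F ∈ ℂ[x,y]` belongs to `Q_m(f)` with respect to `U`: there is a function `h`,
holomorphic on `U × U`, with `f(x)F(x,y) − f(y)F(y,x) = (x − y)^{2m+1} h(x,y)` on `U × U`. -/
def MemQ (U : Set ℂ) (f : ℂ → ℂ) (m : ℕ) (F : MvPolynomial (Fin 2) ℂ) : Prop :=
  ∃ h : ℂ × ℂ → ℂ,
    DifferentiableOn ℂ h (U ×ˢ U) ∧
    ∀ x ∈ U, ∀ y ∈ U,
      f x * MvPolynomial.eval ![x, y] F - f y * MvPolynomial.eval ![y, x] F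
        = (x - y) ^ (2 * m + 1) * h (x, y)

/-- The generalized binomial coefficient `C(w, j) = w(w−1)⋯(w−j+1)/j!`. -/
noncomputable def genChoose (w : ℂ) (j : ℕ) : ℂ :=
  (∏ k ∈ Finset.range j, (w - k)) / (j.factorial : ℂ)

lemma descPochhammer_eval_prod (w : ℂ) (j : ℕ) :
    (descPochhammer ℂ j).eval w = ∏ k ∈ Finset.range j, (w - k) := by
  induction j with
  | zero => simp [descPochhammer_zero]
  | succ n ih => rw [Finset.prod_range_succ, descPochhammer_succ_eval, ih]

lemma genChoose_eval (w : ℂ) (j : ℕ) :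
    genChoose w j = (descPochhammer ℂ j).eval w / (j.factorial : ℂ) := by
  rw [genChoose, descPochhammer_eval_prod]

lemma genChoose_natCast (n : ℕ) (j : ℕ) :
    genChoose (n : ℂ) j = (n.choose j : ℂ) := by
  rw [genChoose_eval, descPochhammer_eval_eq_descFactorial,
    Nat.descFactorial_eq_factorial_mul_choose]
  push_cast
  rw [mul_comm, mul_div_assoc, div_self (by exact_mod_cast j.factorial_ne_zero), mul_one]

lemma prod_split (n : ℂ) (a b : ℕ) :
    (∏ k ∈ Finset.range (a + b), (n - k)) =
      (∏ k ∈ Finset.range a, (n - k)) * ∏ k ∈ Finset.range b, (n - a - k) := by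
  rw [Finset.prod_range_add]
  congr 1
  refine Finset.prod_congr rfl fun k _ => ?_
  push_cast; ring

-- trinomial revision 1
lemma genChoose_tri (n : ℂ) (p q : ℕ) :
    genChoose n p * genChoose (n - p) q = genChoose n q * genChoose (n - q) p := by
  have key : ∀ a b : ℕ, genChoose n a * genChoose (n - a) b
      = (∏ k ∈ Finset.range (a + b), (n - k)) / ((a.factorial : ℂ) * (b.factorial : ℂ)) := by
    intro a b
    rw [genChoose, genChoose, prod_split n a b]
    field_simp
  rw [key, key, Nat.add_comm q p, mul_comm ((p.factorial : ℂ)) _]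

-- trinomial revision 2
lemma genChoose_tri2 (n : ℂ) (p k : ℕ) (h : k ≤ p) :
    genChoose n p * (p.choose k : ℂ) = genChoose n k * genChoose (n - k) (p - k) := by
  rw [genChoose, genChoose, genChoose]
  have hsplit := prod_split n k (p - k)
  rw [Nat.add_sub_cancel' h] at hsplit
  rw [hsplit]
  have hfac : (p.factorial : ℂ) = (k.factorial : ℂ) * ((p - k).factorial : ℂ) * (p.choose k : ℂ) := by
    rw [← Nat.cast_mul, ← Nat.cast_mul, ← Nat.choose_mul_factorial_mul_factorial h]
    push_cast; ring
  rw [hfac]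
  have h1 : (k.factorial : ℂ) ≠ 0 := by exact_mod_cast k.factorial_ne_zero
  have h2 : ((p - k).factorial : ℂ) ≠ 0 := by exact_mod_cast (p - k).factorial_ne_zero
  have h3 : (p.choose k : ℂ) ≠ 0 := by exact_mod_cast Nat.choose_pos h |>.ne'
  field_simp

lemma poly_zero_of_nat_roots (p : Polynomial ℂ) (h : ∀ n : ℕ, p.eval (n : ℂ) = 0) : p = 0 :=
  p.eq_zero_of_infinite_isRoot
    (Set.infinite_of_injective_forall_mem Nat.cast_injective (fun n => h n))

lemma genChoose_vandermonde (M : ℕ) (a b : ℂ) :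
    ∑ i ∈ Finset.range (M + 1), genChoose a i * genChoose b (M - i)
      = genChoose (a + b) M := by
  -- natural number case
  have hnat : ∀ n₁ n₂ : ℕ,
      ∑ i ∈ Finset.range (M + 1), genChoose (n₁ : ℂ) i * genChoose (n₂ : ℂ) (M - i)
        = genChoose ((n₁ : ℂ) + (n₂ : ℂ)) M := by
    intro n₁ n₂
    have := Nat.add_choose_eq n₁ n₂ M
    rw [Finset.Nat.sum_antidiagonal_eq_sum_range_succ_mk] at this
    have hcast : ((n₁ + n₂ : ℕ) : ℂ) = (n₁ : ℂ) + (n₂ : ℂ) := by push_cast; ring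
    rw [← hcast, genChoose_natCast]
    calc ∑ i ∈ Finset.range (M + 1), genChoose (n₁ : ℂ) i * genChoose (n₂ : ℂ) (M - i)
        = ∑ i ∈ Finset.range (M + 1), ((n₁.choose i * n₂.choose (M - i) : ℕ) : ℂ) := by
          refine Finset.sum_congr rfl fun i _ => ?_
          rw [genChoose_natCast, genChoose_natCast]; push_cast; ring
      _ = (((n₁ + n₂).choose M : ℕ) : ℂ) := by rw [← Nat.cast_sum, ← this]
  -- polynomial in first variable, second a natural number
  have hhalf : ∀ n₂ : ℕ,
      ∑ i ∈ Finset.range (M + 1), genChoose a i * genChoose (n₂ : ℂ) (M - i)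
        = genChoose (a + (n₂ : ℂ)) M := by
    intro n₂
    set p : Polynomial ℂ :=
      (∑ i ∈ Finset.range (M + 1),
        Polynomial.C (genChoose (n₂ : ℂ) (M - i) * ((i.factorial : ℂ))⁻¹) * descPochhammer ℂ i)
      - Polynomial.C ((M.factorial : ℂ))⁻¹ * (descPochhammer ℂ M).comp (Polynomial.X + Polynomial.C (n₂ : ℂ))
      with hp
    have hev : ∀ w : ℂ, p.eval w =
        (∑ i ∈ Finset.range (M + 1), genChoose w i * genChoose (n₂ : ℂ) (M - i))
          - genChoose (w + (n₂ : ℂ)) M := by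
      intro w
      simp only [hp, Polynomial.eval_sub, Polynomial.eval_finset_sum, Polynomial.eval_mul, Polynomial.eval_C, Polynomial.eval_comp, Polynomial.eval_add, Polynomial.eval_X,
        genChoose_eval]
      congr 1
      · refine Finset.sum_congr rfl fun i _ => ?_
        field_simp
      · field_simp
    have hp0 : p = 0 := by
      apply poly_zero_of_nat_roots
      intro n
      rw [hev, hnat n n₂, sub_self]
    have := congrArg (Polynomial.eval a) hp0
    rw [hev] at this
    simpa [sub_eq_zero] using this
  -- polynomial in second variable
  set q : Polynomial ℂ :=
    (∑ i ∈ Finset.range (M + 1),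
      Polynomial.C (genChoose a i * (((M - i).factorial : ℂ))⁻¹) * descPochhammer ℂ (M - i))
    - Polynomial.C ((M.factorial : ℂ))⁻¹ * (descPochhammer ℂ M).comp (Polynomial.X + Polynomial.C a)
    with hq
  have hev : ∀ w : ℂ, q.eval w =
      (∑ i ∈ Finset.range (M + 1), genChoose a i * genChoose w (M - i))
        - genChoose (a + w) M := by
    intro w
    simp only [hq, Polynomial.eval_sub, Polynomial.eval_finset_sum, Polynomial.eval_mul, Polynomial.eval_C, Polynomial.eval_comp, Polynomial.eval_add, Polynomial.eval_X,
      genChoose_eval]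
    congr 1
    · refine Finset.sum_congr rfl fun i _ => ?_
      field_simp
    · rw [add_comm w a]; field_simp
  have hq0 : q = 0 := by
    apply poly_zero_of_nat_roots
    intro n
    rw [hev, hhalf n, sub_self]
  have := congrArg (Polynomial.eval b) hq0
  rw [hev] at this
  simpa [sub_eq_zero] using this

section T
variable (m : ℕ) (z : ℂ)

noncomputable def cc (i : ℕ) : ℂ :=
  genChoose ((m : ℂ) - z) i * genChoose ((m : ℂ) + z) (m - i)

lemma T_identity (k : ℕ) (hk : k ≤ 2 * m) :
    ∑ i ∈ Finset.range (m + 1), cc m z i * genChoose (z + i) k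
      = ∑ i ∈ Finset.range (m + 1), cc m z i * genChoose ((m : ℂ) - i) k := by
  have hLHS : ∑ i ∈ Finset.range (m + 1), cc m z i * genChoose (z + i) k
      = genChoose ((m : ℂ) + z) k *
        ∑ i ∈ Finset.range (m + 1),
          genChoose ((m : ℂ) - z) i * genChoose ((m : ℂ) + z - k) (m - i) := by
    rw [Finset.mul_sum]
    refine Finset.sum_congr rfl fun i hi => ?_
    have him : i ≤ m := Nat.lt_succ_iff.mp (Finset.mem_range.mp hi)
    have hcast : ((m : ℂ) + z) - ((m - i : ℕ) : ℂ) = z + i := by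
      rw [Nat.cast_sub him]; ring
    have := genChoose_tri ((m : ℂ) + z) (m - i) k
    rw [hcast] at this
    unfold cc
    rw [mul_assoc, this]; ring
  have hRHS : ∑ i ∈ Finset.range (m + 1), cc m z i * genChoose ((m : ℂ) - i) k
      = genChoose ((m : ℂ) + z) k *
        ∑ i ∈ Finset.range (m + 1),
          (if k ≤ m - i ∧ i ≤ m then genChoose ((m : ℂ) - z) i * genChoose ((m : ℂ) + z - k) (m - i - k) else 0) := by
    rw [Finset.mul_sum]
    refine Finset.sum_congr rfl fun i hi => ?_
    have him : i ≤ m := Nat.lt_succ_iff.mp (Finset.mem_range.mp hi)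
    have hcast : ((m : ℂ) - i) = (((m - i : ℕ)) : ℂ) := by rw [Nat.cast_sub him]
    rw [hcast, genChoose_natCast]
    by_cases hki : k ≤ m - i
    · have := genChoose_tri2 ((m : ℂ) + z) (m - i) k hki
      simp only [hki, him, and_self, if_true]
      unfold cc
      rw [mul_assoc, this]; ring
    · rw [if_neg (by tauto), Nat.choose_eq_zero_of_lt (by omega)]
      simp
  rw [hLHS, hRHS]
  congr 1
  -- now compare the two Vandermonde sums
  by_cases hkm : k ≤ m
  · have h1 : ∑ i ∈ Finset.range (m + 1),
        genChoose ((m : ℂ) - z) i * genChoose ((m : ℂ) + z - k) (m - i)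
        = genChoose (((m : ℂ) - z) + ((m : ℂ) + z - k)) m := genChoose_vandermonde m _ _
    have h2 : (∑ i ∈ Finset.range (m + 1),
        (if k ≤ m - i ∧ i ≤ m then
          genChoose ((m : ℂ) - z) i * genChoose ((m : ℂ) + z - k) (m - i - k) else 0))
        = ∑ i ∈ Finset.range (m - k + 1),
          genChoose ((m : ℂ) - z) i * genChoose ((m : ℂ) + z - k) ((m - k) - i) := by
      rw [← Finset.sum_subset (Finset.range_subset_range.mpr (by omega : m - k + 1 ≤ m + 1))
        (fun i hi hni => ?_)]
      · refine Finset.sum_congr rfl fun i hi => ?_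
        simp only [Finset.mem_range] at hi
        rw [if_pos ⟨by omega, by omega⟩, show m - i - k = m - k - i by omega]
      · simp only [Finset.mem_range] at hi hni
        rw [if_neg (by omega)]
    rw [h1, h2, genChoose_vandermonde (m - k)]
    have hargs : ((m : ℂ) - z) + ((m : ℂ) + z - k) = ((2 * m - k : ℕ) : ℂ) := by
      rw [Nat.cast_sub (by omega)]; push_cast; ring
    rw [hargs, genChoose_natCast, genChoose_natCast]
    congr 1
    have := Nat.choose_symm (by omega : m ≤ 2 * m - k)
    rw [show 2 * m - k - m = m - k by omega] at this
    omega
  · -- m < k ≤ 2m : both sides are 0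
    have h1 : ∑ i ∈ Finset.range (m + 1),
        genChoose ((m : ℂ) - z) i * genChoose ((m : ℂ) + z - k) (m - i)
        = genChoose (((m : ℂ) - z) + ((m : ℂ) + z - k)) m := genChoose_vandermonde m _ _
    have hargs : ((m : ℂ) - z) + ((m : ℂ) + z - k) = ((2 * m - k : ℕ) : ℂ) := by
      rw [Nat.cast_sub (by omega)]; push_cast; ring
    rw [h1, hargs, genChoose_natCast, Nat.choose_eq_zero_of_lt (by omega)]
    rw [Finset.sum_congr rfl fun i hi => if_neg (by
      have : i ≤ m := Nat.lt_succ_iff.mp (Finset.mem_range.mp hi); omega)]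
    simp
end T

section L
variable (m : ℕ) (z : ℂ)

lemma L_descPoch (k : ℕ) (hk : k ≤ 2 * m) :
    ∑ i ∈ Finset.range (m + 1), cc m z i *
      ((descPochhammer ℂ k).eval (z + i) - (descPochhammer ℂ k).eval ((m : ℂ) - i)) = 0 := by
  have hfac : (k.factorial : ℂ) ≠ 0 := by exact_mod_cast k.factorial_ne_zero
  have heval : ∀ w : ℂ, (descPochhammer ℂ k).eval w = (k.factorial : ℂ) * genChoose w k := by
    intro w; rw [genChoose_eval, mul_div_cancel₀ _ hfac]
  simp only [heval, ← mul_sub]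
  have goal2 : ∑ i ∈ Finset.range (m + 1),
        cc m z i * ((k.factorial : ℂ) * (genChoose (z + i) k - genChoose ((m : ℂ) - i) k))
      = (k.factorial : ℂ) * ((∑ i ∈ Finset.range (m + 1), cc m z i * genChoose (z + i) k)
          - ∑ i ∈ Finset.range (m + 1), cc m z i * genChoose ((m : ℂ) - i) k) := by
    rw [mul_sub ((k.factorial : ℂ)), Finset.mul_sum, Finset.mul_sum, ← Finset.sum_sub_distrib]
    refine Finset.sum_congr rfl fun i _ => ?_
    ring
  rw [goal2, T_identity m z k hk, sub_self, mul_zero]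

lemma L_poly : ∀ N, ∀ q : Polynomial ℂ, q.natDegree ≤ N → N ≤ 2 * m →
    ∑ i ∈ Finset.range (m + 1), cc m z i *
      (q.eval (z + i) - q.eval ((m : ℂ) - i)) = 0 := by
  intro N
  induction N with
  | zero =>
    intro q hq _
    rw [Polynomial.eq_C_of_natDegree_le_zero hq]
    simp
  | succ N ih =>
    intro q hq hN
    set a := q.coeff (N + 1) with ha
    set r := q - Polynomial.C a * descPochhammer ℂ (N + 1) with hr
    have hdP : (descPochhammer ℂ (N + 1)).natDegree = N + 1 := descPochhammer_natDegree ℂ (N + 1)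
    have hdPm : (descPochhammer ℂ (N + 1)).Monic := monic_descPochhammer ℂ (N + 1)
    have hrdeg : r.natDegree ≤ N := by
      rw [Polynomial.natDegree_le_iff_coeff_eq_zero]
      intro j hj
      rw [hr, Polynomial.coeff_sub, Polynomial.coeff_C_mul]
      have hc1 : (descPochhammer ℂ (N + 1)).coeff (N + 1) = 1 := by
        have := hdPm.coeff_natDegree
        rwa [hdP] at this
      rcases eq_or_lt_of_le (Nat.succ_le_of_lt hj) with h | h
      · have hj1 : j = N + 1 := by omega
        subst hj1
        rw [hc1, mul_one, ← ha, sub_self]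
      · rw [Polynomial.coeff_eq_zero_of_natDegree_lt (lt_of_le_of_lt hq h),
          Polynomial.coeff_eq_zero_of_natDegree_lt (by rw [hdP]; exact h), mul_zero, sub_zero]
    have hsplit : q = r + Polynomial.C a * descPochhammer ℂ (N + 1) := by rw [hr]; ring
    rw [hsplit]
    simp only [Polynomial.eval_add, Polynomial.eval_mul, Polynomial.eval_C]
    calc ∑ i ∈ Finset.range (m + 1), cc m z i *
          (r.eval (z + i) + a * (descPochhammer ℂ (N + 1)).eval (z + i)
            - (r.eval ((m : ℂ) - i) + a * (descPochhammer ℂ (N + 1)).eval ((m : ℂ) - i)))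
        = (∑ i ∈ Finset.range (m + 1), cc m z i * (r.eval (z + i) - r.eval ((m : ℂ) - i)))
          + a * ∑ i ∈ Finset.range (m + 1), cc m z i *
            ((descPochhammer ℂ (N + 1)).eval (z + i)
              - (descPochhammer ℂ (N + 1)).eval ((m : ℂ) - i)) := by
          rw [Finset.mul_sum, ← Finset.sum_add_distrib]
          refine Finset.sum_congr rfl fun i _ => ?_
          ring
      _ = 0 := by
          rw [ih r hrdeg (by omega), L_descPoch m z (N + 1) hN, mul_zero, add_zero]

lemma S_vanish (k : ℕ) (hk : k ≤ 2 * m) :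
    ∑ i ∈ Finset.range (m + 1), cc m z i * ((z + i) ^ k - ((m : ℂ) - i) ^ k) = 0 := by
  have := L_poly m z (2 * m) (Polynomial.X ^ k) (by simpa using hk) le_rfl
  simpa using this
end L

lemma entire_deriv {f : ℂ → ℂ} (hf : Differentiable ℂ f) : Differentiable ℂ (deriv f) := by
  have h := (hf.differentiableOn.analyticOnNhd isOpen_univ).deriv
  exact differentiableOn_univ.mp h.differentiableOn

lemma entire_iteratedDeriv {f : ℂ → ℂ} (hf : Differentiable ℂ f) (n : ℕ) :
    Differentiable ℂ (iteratedDeriv n f) := by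
  induction n with
  | zero => simpa [iteratedDeriv_zero]
  | succ n ih => rw [iteratedDeriv_succ]; exact entire_deriv ih

lemma entire_dslope {f : ℂ → ℂ} (hf : Differentiable ℂ f) (a : ℂ) :
    Differentiable ℂ (dslope f a) := by
  intro b
  by_cases hb : b = a
  · subst hb
    obtain ⟨p, hp⟩ := (hf.differentiableOn.analyticOnNhd isOpen_univ) b trivial
    obtain ⟨r, hr⟩ := hp
    exact (HasFPowerSeriesAt.has_fpower_series_dslope_fslope ⟨r, hr⟩).analyticAt.differentiableAt
  · exact (differentiableAt_dslope_of_ne hb).mpr (hf b)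

-- product rule for iterated derivatives of x * g x
lemma iteratedDeriv_id_mul {g : ℂ → ℂ} (hg : Differentiable ℂ g) (k : ℕ) :
    iteratedDeriv (k + 1) (fun w => w * g w)
      = fun x => x * iteratedDeriv (k + 1) g x + (k + 1) * iteratedDeriv k g x := by
  induction k with
  | zero =>
    rw [iteratedDeriv_one]
    funext x
    have h : HasDerivAt (fun w => w * g w) (1 * g x + x * deriv g x) x :=
      (hasDerivAt_id x).mul (hg x).hasDerivAt
    rw [h.deriv, iteratedDeriv_one, iteratedDeriv_zero]
    ring
  | succ k ih =>
    rw [iteratedDeriv_succ, ih]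
    funext x
    have h1 : HasDerivAt (fun w : ℂ => w * iteratedDeriv (k + 1) g w)
        (1 * iteratedDeriv (k + 1) g x + x * deriv (iteratedDeriv (k + 1) g) x) x :=
      (hasDerivAt_id x).mul ((entire_iteratedDeriv hg (k + 1)) x).hasDerivAt
    have h2 : HasDerivAt (fun w : ℂ => ((k : ℂ) + 1) * iteratedDeriv k g w)
        (((k : ℂ) + 1) * deriv (iteratedDeriv k g) x) x :=
      ((entire_iteratedDeriv hg k) x).hasDerivAt.const_mul _
    have h := (h1.fun_add h2).deriv
    simp only [← iteratedDeriv_succ] at h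
    push_cast at h ⊢
    rw [h]
    ring

-- factorization of entire functions with vanishing derivatives
lemma entire_factor : ∀ (n : ℕ) (f : ℂ → ℂ), Differentiable ℂ f →
    (∀ k < n, iteratedDeriv k f 0 = 0) →
    ∃ g : ℂ → ℂ, Differentiable ℂ g ∧ ∀ w, f w = w ^ n * g w := by
  intro n
  induction n with
  | zero => exact fun f hf _ => ⟨f, hf, fun w => by simp⟩
  | succ n ih =>
    intro f hf hvan
    have hf0 : f 0 = 0 := by simpa [iteratedDeriv_zero] using hvan 0 (Nat.succ_pos n)
    set g₁ := dslope f 0 with hg₁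
    have hg₁d : Differentiable ℂ g₁ := entire_dslope hf 0
    have hfe : ∀ w, f w = w * g₁ w := by
      intro w
      have := sub_smul_dslope f 0 w
      simp only [sub_zero, smul_eq_mul, hf0] at this
      rw [← this, hg₁]
    have hvan₁ : ∀ k < n, iteratedDeriv k g₁ 0 = 0 := by
      intro k hk
      have h1 : iteratedDeriv (k + 1) f 0 = 0 := hvan (k + 1) (by omega)
      have h2 : iteratedDeriv (k + 1) f = fun x => x * iteratedDeriv (k + 1) g₁ x
          + (k + 1) * iteratedDeriv k g₁ x := by
        rw [show f = fun w => w * g₁ w from funext hfe]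
        exact iteratedDeriv_id_mul hg₁d k
      rw [h2] at h1
      simp only [zero_mul, zero_add] at h1
      push_cast at h1
      rcases mul_eq_zero.mp h1 with h | h
      · exact absurd h (Nat.cast_add_one_ne_zero k)
      · exact h
    obtain ⟨g, hg, hge⟩ := ih g₁ hg₁d hvan₁
    exact ⟨g, hg, fun w => by rw [hfe w, hge w, pow_succ]; ring⟩

lemma expsum_entire {ι : Type*} (t : Finset ι) (β a : ι → ℂ) :
    Differentiable ℂ (fun w => ∑ j ∈ t, β j * Complex.exp (a j * w)) := by
  apply Differentiable.fun_sum
  intro j _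
  apply Differentiable.const_mul
  exact (Complex.differentiable_exp.comp ((differentiable_id.const_mul (a j))))

lemma expsum_iteratedDeriv {ι : Type*} (t : Finset ι) (β a : ι → ℂ) (k : ℕ) :
    iteratedDeriv k (fun w => ∑ j ∈ t, β j * Complex.exp (a j * w))
      = fun w => ∑ j ∈ t, β j * (a j) ^ k * Complex.exp (a j * w) := by
  induction k with
  | zero => simp
  | succ k ih =>
    rw [iteratedDeriv_succ, ih]
    funext x
    have h : HasDerivAt (fun w => ∑ j ∈ t, β j * (a j) ^ k * Complex.exp (a j * w))
        (∑ j ∈ t, β j * (a j) ^ (k + 1) * Complex.exp (a j * x)) x := by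
      have : ∀ j ∈ t, HasDerivAt (fun w => β j * (a j) ^ k * Complex.exp (a j * w))
          (β j * (a j) ^ (k + 1) * Complex.exp (a j * x)) x := by
        intro j _
        have hlin : HasDerivAt (fun w : ℂ => a j * w) (a j) x := by
          simpa using (hasDerivAt_id x).const_mul (a j)
        have := (hlin.cexp).const_mul (β j * (a j) ^ k)
        exact this.congr_deriv (by ring)
      exact HasDerivAt.fun_sum this
    exact h.deriv

noncomputable def theStrip : Set ℂ := {w : ℂ | |w.im| < 2 * Real.pi}

lemma key_chi (m : ℕ) (z : ℂ) : ∃ χ : ℂ → ℂ,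
    DifferentiableOn ℂ χ theStrip ∧
    ∀ w ∈ theStrip,
      ∑ i ∈ Finset.range (m + 1),
          cc m z i * (Complex.exp ((z + i) * w) - Complex.exp (((m : ℂ) - i) * w))
        = (Complex.exp w - 1) ^ (2 * m + 1) * χ w := by
  classical
  set t : Finset (ℕ ⊕ ℕ) := (Finset.range (m + 1)).disjSum (Finset.range (m + 1)) with ht
  set β : ℕ ⊕ ℕ → ℂ := Sum.elim (fun i => cc m z i) (fun i => -cc m z i) with hβ
  set aa : ℕ ⊕ ℕ → ℂ := Sum.elim (fun i => z + i) (fun i => (m : ℂ) - i) with haa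
  set Ψ : ℂ → ℂ := fun w => ∑ j ∈ t, β j * Complex.exp (aa j * w) with hΨ
  have hΨeq : ∀ w, Ψ w = ∑ i ∈ Finset.range (m + 1),
      cc m z i * (Complex.exp ((z + i) * w) - Complex.exp (((m : ℂ) - i) * w)) := by
    intro w
    rw [hΨ]
    simp only [ht, Finset.sum_disjSum, hβ, haa, Sum.elim_inl, Sum.elim_inr]
    rw [← Finset.sum_add_distrib]
    refine Finset.sum_congr rfl fun i _ => ?_
    ring
  have hΨd : Differentiable ℂ Ψ := expsum_entire t β aa
  have hvan : ∀ k < 2 * m + 1, iteratedDeriv k Ψ 0 = 0 := by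
    intro k hk
    rw [hΨ, expsum_iteratedDeriv]
    simp only [mul_zero, Complex.exp_zero, mul_one]
    simp only [ht, Finset.sum_disjSum, hβ, haa, Sum.elim_inl, Sum.elim_inr]
    rw [← Finset.sum_add_distrib]
    have := S_vanish m z k (by omega)
    rw [← this]
    refine Finset.sum_congr rfl fun i _ => ?_
    ring
  obtain ⟨g, hgd, hge⟩ := entire_factor (2 * m + 1) Ψ hΨd hvan
  set α : ℂ → ℂ := dslope Complex.exp 0 with hα
  have hαd : Differentiable ℂ α := entire_dslope Complex.differentiable_exp 0
  have hαeq : ∀ w, w * α w = Complex.exp w - 1 := by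
    intro w
    have := sub_smul_dslope Complex.exp 0 w
    simpa [Complex.exp_zero] using this
  have hαne : ∀ w ∈ theStrip, α w ≠ 0 := by
    intro w hw
    by_cases hw0 : w = 0
    · subst hw0
      rw [hα, dslope_same, Complex.deriv_exp, Complex.exp_zero]
      exact one_ne_zero
    · intro hcon
      have h1 : Complex.exp w - 1 = 0 := by rw [← hαeq w, hcon, mul_zero]
      have h2 : Complex.exp w = 1 := by linear_combination h1
      obtain ⟨n, hn⟩ := Complex.exp_eq_one_iff.mp h2
      have him : w.im = (n : ℝ) * (2 * Real.pi) := by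
        rw [hn]; simp
      rw [theStrip, Set.mem_setOf_eq, him] at hw
      have hpi : 0 < 2 * Real.pi := by positivity
      rw [abs_mul, abs_of_pos hpi] at hw
      have h3 : |(n : ℝ)| < 1 := by nlinarith [abs_nonneg ((n : ℝ))]
      have h4 : n = 0 := by
        have h5 : ((|n| : ℤ) : ℝ) < 1 := by rwa [← Int.cast_abs] at h3
        have h6 : |n| < 1 := by exact_mod_cast h5
        exact Int.abs_lt_one_iff.mp h6
      exact hw0 (by rw [hn, h4]; simp)
  refine ⟨fun w => g w / (α w) ^ (2 * m + 1), ?_, ?_⟩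
  · intro w hw
    exact ((hgd w).div ((hαd w).pow _) (pow_ne_zero _ (hαne w hw))).differentiableWithinAt
  · intro w hw
    rw [← hΨeq w, hge w]
    have hfac : (Complex.exp w - 1) ^ (2 * m + 1) = w ^ (2 * m + 1) * (α w) ^ (2 * m + 1) := by
      rw [← mul_pow, hαeq w]
    rw [hfac]
    have hne : (α w) ^ (2 * m + 1) ≠ 0 := pow_ne_zero _ (hαne w hw)
    field_simp

/-- for a non-integer `z` and the principal branch `f(x) = x^z` on the slit
plane `U = ℂ ∖ ℝ_{≤0}`, the polynomial
`P(x,y) = Σ_{i=0}^m C(m−z, i)·C(m+z, m−i)·x^i·y^{m−i}` belongs to `Q_m(f)` with respect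
to `U`, and `P(x,x) = C(2m, m)·x^m`. -/
theorem stmt19 (m : ℕ) (z : ℂ) (hz : ∀ n : ℤ, z ≠ (n : ℂ)) :
    MemQ Complex.slitPlane (fun x => Complex.exp (z * Complex.log x)) m
      (∑ i ∈ Finset.range (m + 1),
        MvPolynomial.C (genChoose ((m : ℂ) - z) i * genChoose ((m : ℂ) + z) (m - i)) *
          X 0 ^ i * X 1 ^ (m - i))
    ∧
    MvPolynomial.aeval (fun _ : Fin 2 => (Polynomial.X : Polynomial ℂ))
      (∑ i ∈ Finset.range (m + 1),
        MvPolynomial.C (genChoose ((m : ℂ) - z) i * genChoose ((m : ℂ) + z) (m - i)) *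
          X 0 ^ i * X 1 ^ (m - i))
      = Polynomial.C (genChoose ((2 * m : ℕ) : ℂ) m) * Polynomial.X ^ m := by
  have hP : ∀ u v : ℂ, MvPolynomial.eval ![u, v]
      (∑ i ∈ Finset.range (m + 1),
        MvPolynomial.C (genChoose ((m : ℂ) - z) i * genChoose ((m : ℂ) + z) (m - i)) *
          X 0 ^ i * X 1 ^ (m - i))
      = ∑ i ∈ Finset.range (m + 1), cc m z i * (u ^ i * v ^ (m - i)) := by
    intro u v
    rw [map_sum]
    refine Finset.sum_congr rfl fun i _ => ?_
    simp [cc, mul_assoc]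
  constructor
  · -- the MemQ part
    obtain ⟨χ, hχd, hχe⟩ := key_chi m z
    have hopen : IsOpen theStrip := by
      have h : theStrip = (fun w : ℂ => |w.im|) ⁻¹' Set.Iio (2 * Real.pi) := rfl
      rw [h]
      exact isOpen_Iio.preimage (continuous_abs.comp Complex.continuous_im)
    have harg : ∀ x ∈ Complex.slitPlane, |(Complex.log x).im| < Real.pi := by
      intro x hx
      rw [Complex.log_im]
      refine abs_lt.mpr ⟨Complex.neg_pi_lt_arg x, Complex.arg_lt_pi_iff.mpr ?_⟩
      rcases Complex.mem_slitPlane_iff.mp hx with h | h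
      · exact Or.inl h.le
      · exact Or.inr h
    have hmem : ∀ x ∈ Complex.slitPlane, ∀ y ∈ Complex.slitPlane,
        Complex.log x - Complex.log y ∈ theStrip := by
      intro x hx y hy
      have h1 := harg x hx
      have h2 := harg y hy
      have : |(Complex.log x - Complex.log y).im| ≤ |(Complex.log x).im| + |(Complex.log y).im| := by
        rw [Complex.sub_im]
        exact abs_sub _ _
      rw [theStrip, Set.mem_setOf_eq]
      linarith
    refine ⟨fun p => Complex.exp (z * Complex.log p.2) * (p.2 ^ (m + 1))⁻¹
        * χ (Complex.log p.1 - Complex.log p.2), ?_, ?_⟩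
    · intro p hp
      obtain ⟨hx, hy⟩ := hp
      apply DifferentiableAt.differentiableWithinAt
      have dlog1 : DifferentiableAt ℂ (fun p : ℂ × ℂ => Complex.log p.1) p :=
        (Complex.differentiableAt_log hx).comp p differentiableAt_fst
      have dlog2 : DifferentiableAt ℂ (fun p : ℂ × ℂ => Complex.log p.2) p :=
        (Complex.differentiableAt_log hy).comp p differentiableAt_snd
      have dnum : DifferentiableAt ℂ (fun p : ℂ × ℂ => Complex.exp (z * Complex.log p.2)) p :=
        Complex.differentiable_exp.differentiableAt.comp p (dlog2.const_mul z)
      have dden : DifferentiableAt ℂ (fun p : ℂ × ℂ => p.2 ^ (m + 1)) p :=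
        differentiableAt_snd.pow _
      have hden0 : p.2 ^ (m + 1) ≠ 0 := pow_ne_zero _ (Complex.slitPlane_ne_zero hy)
      have dχ : DifferentiableAt ℂ (fun p : ℂ × ℂ => χ (Complex.log p.1 - Complex.log p.2)) p := by
        have h1 : DifferentiableAt ℂ χ (Complex.log p.1 - Complex.log p.2) :=
          (hχd _ (hmem _ hx _ hy)).differentiableAt (hopen.mem_nhds (hmem _ hx _ hy))
        exact h1.comp p (dlog1.sub dlog2)
      have hinv : DifferentiableAt ℂ (fun p : ℂ × ℂ => (p.2 ^ (m + 1))⁻¹) p :=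
        dden.inv hden0
      exact (dnum.mul hinv).mul dχ
    · intro x hx y hy
      have hx0 := Complex.slitPlane_ne_zero hx
      have hy0 := Complex.slitPlane_ne_zero hy
      set w := Complex.log x - Complex.log y with hw
      have hxe : x = y * Complex.exp w := by
        rw [hw, Complex.exp_sub, Complex.exp_log hx0, Complex.exp_log hy0]
        field_simp
      have hzx : Complex.exp (z * Complex.log x)
          = Complex.exp (z * Complex.log y) * Complex.exp (z * w) := by
        rw [← Complex.exp_add]
        congr 1
        rw [hw]
        ring
      rw [hP, hP]
      have hmain : Complex.exp (z * Complex.log x)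
            * (∑ i ∈ Finset.range (m + 1), cc m z i * (x ^ i * y ^ (m - i)))
          - Complex.exp (z * Complex.log y)
            * (∑ i ∈ Finset.range (m + 1), cc m z i * (y ^ i * x ^ (m - i)))
          = Complex.exp (z * Complex.log y) * y ^ m
            * ∑ i ∈ Finset.range (m + 1),
                cc m z i * (Complex.exp ((z + i) * w) - Complex.exp (((m : ℂ) - i) * w)) := by
        rw [Finset.mul_sum, Finset.mul_sum, Finset.mul_sum, ← Finset.sum_sub_distrib]
        refine Finset.sum_congr rfl fun i hi => ?_
        have him : i ≤ m := Nat.lt_succ_iff.mp (Finset.mem_range.mp hi)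
        have hsplit1 : Complex.exp ((z + i) * w)
            = Complex.exp (z * w) * (Complex.exp w) ^ i := by
          rw [← Complex.exp_nat_mul, ← Complex.exp_add]
          congr 1
          ring
        have hsplit2 : Complex.exp (((m : ℂ) - i) * w) = (Complex.exp w) ^ (m - i) := by
          rw [← Complex.exp_nat_mul]
          congr 1
          rw [Nat.cast_sub him]
        have hym : (y : ℂ) ^ m = y ^ i * y ^ (m - i) := by
          rw [← pow_add]
          congr 1
          omega
        rw [hzx, hsplit1, hsplit2, hym, hxe, mul_pow, mul_pow]
        ring
      rw [hmain, hχe w (hmem x hx y hy)]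
      have hxy : x - y = y * (Complex.exp w - 1) := by
        rw [hxe]; ring
      rw [hxy, mul_pow]
      have hyN : (y : ℂ) ^ (2 * m + 1) = y ^ m * y ^ (m + 1) := by
        rw [← pow_add]
        congr 1
        omega
      rw [hyN]
      have hyne : (y : ℂ) ^ (m + 1) ≠ 0 := pow_ne_zero _ hy0
      field_simp
      ring
  · -- the aeval part
    rw [map_sum]
    have hterm : ∀ i ∈ Finset.range (m + 1),
        MvPolynomial.aeval (fun _ : Fin 2 => (Polynomial.X : Polynomial ℂ))
          (MvPolynomial.C (genChoose ((m : ℂ) - z) i * genChoose ((m : ℂ) + z) (m - i)) *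
            X 0 ^ i * X 1 ^ (m - i))
        = Polynomial.C (cc m z i) * Polynomial.X ^ m := by
      intro i hi
      have him : i ≤ m := Nat.lt_succ_iff.mp (Finset.mem_range.mp hi)
      simp only [map_mul, map_pow, MvPolynomial.aeval_C, MvPolynomial.aeval_X,
        Polynomial.algebraMap_eq]
      rw [mul_assoc, ← pow_add, ← Polynomial.C_mul, show i + (m - i) = m by omega]
      rfl
    rw [Finset.sum_congr rfl hterm, ← Finset.sum_mul, ← map_sum]
    congr 1
    have := genChoose_vandermonde m ((m : ℂ) - z) ((m : ℂ) + z)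
    have harg : (m : ℂ) - z + ((m : ℂ) + z) = ((2 * m : ℕ) : ℂ) := by push_cast; ring
    rw [harg] at this
    unfold cc
    exact congrArg Polynomial.C this
end
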